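/- arXiv:1609.08828 — 8 statements merged into one kernel-verified Lean document; each statement's English description precedes it below -/
import Mathlib

section
/- Let B be a real skew-symmetric 3×3 matrix, let V be a real vector space equipped with a symmetric bilinear form ⟨·,·⟩, and let v_1, v_2, v_3 ∈ V be a realization by reflections of B, i.e. (1) ⟨v_i,v_i⟩ = 2 for i = 1,2,3; (2) |⟨v_i,v_j⟩| = |b_ij| for i ≠ j; (3) if ⟨v_i,v_j⟩ ≠ 0 for all i ≠ j, then the number of pairs i < j with ⟨v_i,v_j⟩ > 0 is even if B is acyclic and odd if B is cyclic. Fix k ∈ {1,2,3} and define v'_j = v_j − ⟨v_j,v_k⟩v_k if b_jk > 0, v'_k = −v_k, and v'_j = v_j otherwise. Then the triple (v'_1, v'_2, v'_3) satisfies conditions (1)–(3) with respect to the mutated matrix B' = μ_k(B). -/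
open Matrix
noncomputable section

/-- Mutation of a real `3 × 3` matrix in direction `k`. -/
def mutate (k : Fin 3) (B : Matrix (Fin 3) (Fin 3) ℝ) : Matrix (Fin 3) (Fin 3) ℝ :=
  Matrix.of fun i j =>
    if i = k ∨ j = k then -B i j
    else B i j + (|B i k| * B k j + B i k * |B k j|) / 2

/-- One step of mutation equivalence: a single mutation, or a simultaneous
permutation of the index set. -/
def MutationStep (B B' : Matrix (Fin 3) (Fin 3) ℝ) : Prop :=
  (∃ k : Fin 3, B' = mutate k B) ∨
  (∃ σ : Equiv.Perm (Fin 3), B' = Matrix.of fun i j => B (σ i) (σ j))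

/-- Mutation equivalence: a finite sequence of mutations and simultaneous permutations. -/
def MutationEquiv : Matrix (Fin 3) (Fin 3) ℝ → Matrix (Fin 3) (Fin 3) ℝ → Prop :=
  Relation.ReflTransGen MutationStep

/-- `B` is cyclic if `b₁₂, b₂₃, b₃₁` are all nonzero and of the same sign. -/
def IsCyclicMat (B : Matrix (Fin 3) (Fin 3) ℝ) : Prop :=
  (0 < B 0 1 ∧ 0 < B 1 2 ∧ 0 < B 2 0) ∨ (B 0 1 < 0 ∧ B 1 2 < 0 ∧ B 2 0 < 0)

instance : DecidablePred IsCyclicMat := fun B => by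
  unfold IsCyclicMat; exact inferInstance

/-- `B` is mutation-cyclic if every matrix in its mutation class is cyclic. -/
def IsMutationCyclic (B : Matrix (Fin 3) (Fin 3) ℝ) : Prop :=
  ∀ B', MutationEquiv B B' → IsCyclicMat B'

/-- `B` is mutation-acyclic if some matrix in its mutation class is acyclic. -/
def IsMutationAcyclic (B : Matrix (Fin 3) (Fin 3) ℝ) : Prop :=
  ∃ B', MutationEquiv B B' ∧ ¬ IsCyclicMat B'

/-- The Markov constant `C(B)`. -/
def markov (B : Matrix (Fin 3) (Fin 3) ℝ) : ℝ :=
  (B 0 1) ^ 2 + (B 1 2) ^ 2 + (B 2 0) ^ 2 -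
    (if IsCyclicMat B then 1 else -1) * |B 0 1 * B 1 2 * B 2 0|

/-- The Lorentzian symmetric bilinear form on `ℝ^{2,1}`. -/
def lform (x y : Fin 3 → ℝ) : ℝ := x 0 * y 0 + x 1 * y 1 - x 2 * y 2

/-- A realization of `B` by reflections: a triple of vectors of square norm `2`
whose pairwise inner products have the absolute values `|b_ij|`, with the parity
condition on the number of positive inner products. -/
def ReflRealization {V : Type*} [AddCommGroup V] [Module ℝ V]
    (f : V →ₗ[ℝ] V →ₗ[ℝ] ℝ) (B : Matrix (Fin 3) (Fin 3) ℝ) (v : Fin 3 → V) : Prop :=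
  (∀ i, f (v i) (v i) = 2) ∧
  (∀ i j, i ≠ j → |f (v i) (v j)| = |B i j|) ∧
  ((∀ i j, i ≠ j → f (v i) (v j) ≠ 0) →
    (Finset.univ.filter
        (fun p : Fin 3 × Fin 3 => p.1 < p.2 ∧ 0 < f (v p.1) (v p.2))).card % 2
      = if IsCyclicMat B then 1 else 0)

/-- Mutation of a triple of vectors by partial reflections. -/
def mutateVecRefl {V : Type*} [AddCommGroup V] [Module ℝ V]
    (f : V →ₗ[ℝ] V →ₗ[ℝ] ℝ) (B : Matrix (Fin 3) (Fin 3) ℝ) (k : Fin 3) (v : Fin 3 → V) :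
    Fin 3 → V :=
  fun j =>
    if j = k then -v k
    else if 0 < B j k then v j - f (v j) (v k) • v k
    else v j

/-- A realization of `B` by `π`-rotations: a triple of vectors in `ℝ^{2,1}` of square
norm `-2` with pairwise inner products `-|b₁₂|, -|b₂₃|, -|b₃₁|`. -/
def RotRealization (B : Matrix (Fin 3) (Fin 3) ℝ) (v : Fin 3 → (Fin 3 → ℝ)) : Prop :=
  (∀ i, lform (v i) (v i) = -2) ∧
  lform (v 0) (v 1) = -|B 0 1| ∧ lform (v 1) (v 2) = -|B 1 2| ∧
  lform (v 2) (v 0) = -|B 2 0|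

/-- Mutation of a triple of points by partial `π`-rotations. -/
def mutateVecRot (B : Matrix (Fin 3) (Fin 3) ℝ) (k : Fin 3) (v : Fin 3 → (Fin 3 → ℝ)) :
    Fin 3 → (Fin 3 → ℝ) :=
  fun j => if 0 < B j k then -v j - lform (v j) (v k) • v k else v j

/-!
Everything is read off the triangle `k → k+1 → k+2`: its weights `a = b_{k,k+1}`,
`b = b_{k+1,k+2}`, `c = b_{k+2,k}` and the Gram entries `x, y, z` of the corresponding pairs of
vectors. When these entries are nonzero, an odd number of them is positive iff `xyz > 0`, so the
parity condition says `xyz > 0 ↔ (a, b, c) cyclic`.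

If `a` and `c` have opposite signs, mutation flips `x` and `z` together and keeps `y` and `b`,
and neither triangle is cyclic. If `ac ≥ 0`, the parity condition amounts to `xyz = |a| b c`;
exactly one of `v_{k+1}, v_{k+2}` is reflected, which turns `y` into `y - xz` and `b` into
`b - |a| c`, and `(y - xz) xz = |a| c (b - |a| c)` gives both the absolute value and the sign of
the new entry.
-/

def IsCyclicTriple (a b c : ℝ) : Prop :=
  (0 < a ∧ 0 < b ∧ 0 < c) ∨ (a < 0 ∧ b < 0 ∧ c < 0)

namespace IsCyclicTriple

variable {a b c : ℝ}

theorem rotate_iff : IsCyclicTriple a b c ↔ IsCyclicTriple b c a := by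
  unfold IsCyclicTriple
  tauto

theorem iff_pos_of_mul_pos (hac : 0 < a * c) : IsCyclicTriple a b c ↔ 0 < |a| * b * c := by
  rcases pos_and_pos_or_neg_and_neg_of_mul_pos hac with ⟨ha, hc⟩ | ⟨ha, hc⟩
  · simp [IsCyclicTriple, ha, hc, abs_of_pos ha, not_lt.mpr ha.le]
  · simp only [IsCyclicTriple, ha, hc, not_lt.mpr ha.le, not_lt.mpr hc.le, abs_of_neg ha,
      and_false, and_true, true_and, false_or, neg_mul, Left.neg_pos_iff]
    constructor <;> intro h <;> nlinarith [mul_pos_of_neg_of_neg ha hc]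

theorem not_of_mul_neg (hac : a * c < 0) : ¬ IsCyclicTriple a b c := by
  rintro (⟨ha, -, hc⟩ | ⟨ha, -, hc⟩) <;> nlinarith

end IsCyclicTriple

theorem eq_zero_iff_of_abs_eq {x a : ℝ} (h : |x| = |a|) : x = 0 ↔ a = 0 := by
  rw [← abs_eq_zero, h, abs_eq_zero]

structure TriangleRealization (a b c x y z : ℝ) : Prop where
  abs_x : |x| = |a|
  abs_y : |y| = |b|
  abs_z : |z| = |c|
  pos_iff : x ≠ 0 → y ≠ 0 → z ≠ 0 → (0 < x * y * z ↔ IsCyclicTriple a b c)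

namespace TriangleRealization

variable {a b c x y z x' z' : ℝ}

theorem rotate (h : TriangleRealization a b c x y z) : TriangleRealization b c a y z x where
  abs_x := h.abs_y
  abs_y := h.abs_z
  abs_z := h.abs_x
  pos_iff hy hz hx := by
    rw [← IsCyclicTriple.rotate_iff, ← h.pos_iff hx hy hz, show y * z * x = x * y * z by ring]

theorem rotate_iff : TriangleRealization a b c x y z ↔ TriangleRealization b c a y z x :=
  ⟨rotate, fun h => h.rotate.rotate⟩

theorem mul_eq (h : TriangleRealization a b c x y z) (hac : 0 ≤ a * c) :
    x * y * z = |a| * b * c := by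
  by_cases hxyz : x = 0 ∨ y = 0 ∨ z = 0
  · rcases hxyz with hx | hy | hz
    · simp [hx, (eq_zero_iff_of_abs_eq h.abs_x).mp hx]
    · simp [hy, (eq_zero_iff_of_abs_eq h.abs_y).mp hy]
    · simp [hz, (eq_zero_iff_of_abs_eq h.abs_z).mp hz]
  push Not at hxyz
  obtain ⟨hx, hy, hz⟩ := hxyz
  have ha : a ≠ 0 := (eq_zero_iff_of_abs_eq h.abs_x).not.mp hx
  have hc : c ≠ 0 := (eq_zero_iff_of_abs_eq h.abs_z).not.mp hz
  have hpos : 0 < x * y * z ↔ 0 < |a| * b * c :=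
    (h.pos_iff hx hy hz).trans (IsCyclicTriple.iff_pos_of_mul_pos
      (lt_of_le_of_ne hac (mul_ne_zero ha hc).symm))
  have habs : |x * y * z| = |(|a| * b * c)| := by
    simp only [abs_mul, abs_abs, h.abs_x, h.abs_y, h.abs_z]
  rcases abs_eq_abs.mp habs with e | e
  · exact e
  · have hq : |a| * b * c ≠ 0 := by
      have : b ≠ 0 := (eq_zero_iff_of_abs_eq h.abs_y).not.mp hy
      positivity
    rw [e, neg_pos] at hpos
    rcases hq.lt_or_gt with hq | hq
    · linarith [hpos.mp hq]
    · linarith [hpos.mpr hq]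

theorem mutate_of_mul_nonpos (h : TriangleRealization a b c x y z) (hac : a * c ≤ 0)
    (hx : |x'| = |x|) (hz : |z'| = |z|) (hxz : x' * z' = x * z) :
    TriangleRealization (-a) b (-c) x' y z' where
  abs_x := by rw [hx, h.abs_x, abs_neg]
  abs_y := h.abs_y
  abs_z := by rw [hz, h.abs_z, abs_neg]
  pos_iff hx' hy hz' := by
    have hx0 : x ≠ 0 := (eq_zero_iff_of_abs_eq hx).not.mp hx'
    have hz0 : z ≠ 0 := (eq_zero_iff_of_abs_eq hz).not.mp hz'
    have hac' : a * c < 0 := lt_of_le_of_ne hac (mul_ne_zero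
      ((eq_zero_iff_of_abs_eq h.abs_x).not.mp hx0) ((eq_zero_iff_of_abs_eq h.abs_z).not.mp hz0))
    rw [show x' * y * z' = x * y * z by linear_combination y * hxz]
    exact (h.pos_iff hx0 hy hz0).trans (iff_of_false (IsCyclicTriple.not_of_mul_neg hac')
      (IsCyclicTriple.not_of_mul_neg (by linarith [neg_mul_neg a c])))

theorem mutate_of_mul_nonneg (h : TriangleRealization a b c x y z) (hac : 0 ≤ a * c)
    (hx : |x'| = |x|) (hz : |z'| = |z|) (hxz : x' * z' = -(x * z)) :
    TriangleRealization (-a) (b - |a| * c) (-c) x' (y - x * z) z' := by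
  have habs : |x * z| = |(|a| * c)| := by rw [abs_mul, abs_mul, abs_abs, h.abs_x, h.abs_z]
  have key : (y - x * z) * (x * z) = |a| * c * (b - |a| * c) := by
    linear_combination h.mul_eq hac - (sq_eq_sq_iff_abs_eq_abs _ _).mpr habs
  refine ⟨by rw [hx, h.abs_x, abs_neg], ?_, by rw [hz, h.abs_z, abs_neg], ?_⟩
  · by_cases hxz0 : x * z = 0
    · have hac0 : |a| * c = 0 := abs_eq_zero.mp (by rw [← habs, hxz0, abs_zero])
      rw [hxz0, hac0, sub_zero, sub_zero, h.abs_y]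
    · have := congrArg abs key
      rw [abs_mul (y - x * z), abs_mul (|a| * c), ← habs, mul_comm] at this
      exact mul_left_cancel₀ (abs_ne_zero.mpr hxz0) this
  · intro hx' _ hz'
    have hx0 : x ≠ 0 := (eq_zero_iff_of_abs_eq hx).not.mp hx'
    have hz0 : z ≠ 0 := (eq_zero_iff_of_abs_eq hz).not.mp hz'
    have hac' : 0 < -a * -c := by
      rw [neg_mul_neg]
      exact lt_of_le_of_ne hac (mul_ne_zero
        ((eq_zero_iff_of_abs_eq h.abs_x).not.mp hx0)
        ((eq_zero_iff_of_abs_eq h.abs_z).not.mp hz0)).symm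
    rw [IsCyclicTriple.iff_pos_of_mul_pos hac', abs_neg,
      show x' * (y - x * z) * z' = |a| * (b - |a| * c) * -c by
        linear_combination (y - x * z) * hxz - key]

theorem mutate (h : TriangleRealization a b c x y z) :
    TriangleRealization (-a) (b - (|a| * c + a * |c|) / 2) (-c) (if a < 0 then x else -x)
      (if (a < 0 ↔ 0 < c) then y else y - x * z) (if 0 < c then z else -z) := by
  by_cases ha : a < 0 <;> by_cases hc : 0 < c
  · rw [if_pos ha, if_pos (iff_of_true ha hc), if_pos hc, abs_of_neg ha, abs_of_pos hc,
      show b - (-a * c + a * c) / 2 = b by ring]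
    exact h.mutate_of_mul_nonpos (by nlinarith) rfl rfl rfl
  · have e : (|a| * c + a * |c|) / 2 = |a| * c := by
      rw [abs_of_neg ha, abs_of_nonpos (not_lt.mp hc)]; ring
    rw [if_pos ha, if_neg (by tauto), if_neg hc, e]
    exact h.mutate_of_mul_nonneg (by nlinarith) rfl (abs_neg z) (by ring)
  · have e : (|a| * c + a * |c|) / 2 = |a| * c := by
      rw [abs_of_nonneg (not_lt.mp ha), abs_of_pos hc]; ring
    rw [if_neg ha, if_neg (by tauto), if_pos hc, e]
    exact h.mutate_of_mul_nonneg (by nlinarith) (abs_neg x) rfl (by ring)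
  · rw [if_neg ha, if_pos (iff_of_false ha hc), if_neg hc, abs_of_nonneg (not_lt.mp ha),
      abs_of_nonpos (not_lt.mp hc), show b - (a * c + a * -c) / 2 = b by ring]
    exact h.mutate_of_mul_nonpos (by nlinarith) (abs_neg x) (abs_neg z) (by ring)

end TriangleRealization

theorem forall_fin_three_ne_iff {P : Fin 3 → Fin 3 → Prop} (hP : ∀ i j, P i j → P j i) :
    (∀ i j, i ≠ j → P i j) ↔ P 0 1 ∧ P 1 2 ∧ P 2 0 := by
  refine ⟨fun h => ⟨h 0 1 (by decide), h 1 2 (by decide), h 2 0 (by decide)⟩, ?_⟩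
  rintro ⟨h01, h12, h20⟩ i j hij
  fin_cases i <;> fin_cases j <;> first
    | exact absurd rfl hij | assumption | exact hP _ _ ‹_›

theorem card_filter_pos_mod_two_eq_one_iff (g : Fin 3 → Fin 3 → ℝ)
    (h01 : g 0 1 ≠ 0) (h12 : g 1 2 ≠ 0) (h02 : g 0 2 ≠ 0) :
    (Finset.univ.filter fun p : Fin 3 × Fin 3 => p.1 < p.2 ∧ 0 < g p.1 p.2).card % 2 = 1 ↔
      0 < g 0 1 * g 1 2 * g 0 2 := by
  rw [Finset.card_filter, Fintype.sum_prod_type]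
  simp only [Fin.sum_univ_three]
  rcases h01.lt_or_gt with h1 | h1 <;> rcases h12.lt_or_gt with h2 | h2 <;>
    rcases h02.lt_or_gt with h3 | h3 <;>
    simp [h1, h2, h3, not_lt.mpr h1.le, not_lt.mpr h2.le, not_lt.mpr h3.le, mul_pos_iff,
      mul_neg_iff]

theorem Nat.mod_two_eq_ite_iff (n : ℕ) (p : Prop) [Decidable p] :
    (n % 2 = if p then 1 else 0) ↔ (n % 2 = 1 ↔ p) := by
  split_ifs with hp <;> simp [hp]

theorem apply_swap_of_transpose_eq_neg {B : Matrix (Fin 3) (Fin 3) ℝ} (hB : Bᵀ = -B)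
    (i j : Fin 3) : B j i = -B i j := by
  simpa using congrFun (congrFun hB i) j

theorem isCyclicMat_iff (B : Matrix (Fin 3) (Fin 3) ℝ) :
    IsCyclicMat B ↔ IsCyclicTriple (B 0 1) (B 1 2) (B 2 0) :=
  Iff.rfl

section Realization

variable {V : Type*} [AddCommGroup V] [Module ℝ V] {f : V →ₗ[ℝ] V →ₗ[ℝ] ℝ}
  {B : Matrix (Fin 3) (Fin 3) ℝ} {v : Fin 3 → V}

theorem reflRealization_iff_triangle (hf : ∀ x y, f x y = f y x) (hB : Bᵀ = -B) :
    ReflRealization f B v ↔ (∀ i, f (v i) (v i) = 2) ∧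
      TriangleRealization (B 0 1) (B 1 2) (B 2 0)
        (f (v 0) (v 1)) (f (v 1) (v 2)) (f (v 2) (v 0)) := by
  have habs := forall_fin_three_ne_iff (P := fun i j => |f (v i) (v j)| = |B i j|)
    fun i j h => by rw [hf, h, apply_swap_of_transpose_eq_neg hB, abs_neg]
  have hne := forall_fin_three_ne_iff (P := fun i j => f (v i) (v j) ≠ 0)
    fun i j h => by rwa [hf]
  have hcount : ∀ (hx : f (v 0) (v 1) ≠ 0) (hy : f (v 1) (v 2) ≠ 0), f (v 2) (v 0) ≠ 0 →
      ((Finset.univ.filter fun p : Fin 3 × Fin 3 => p.1 < p.2 ∧ 0 < f (v p.1) (v p.2)).card % 2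
        = 1 ↔ 0 < f (v 0) (v 1) * f (v 1) (v 2) * f (v 2) (v 0)) := fun hx hy hz => by
    rw [card_filter_pos_mod_two_eq_one_iff (fun i j => f (v i) (v j)) hx hy (by rwa [hf]),
      hf (v 0) (v 2)]
  unfold ReflRealization
  rw [habs, hne, Nat.mod_two_eq_ite_iff, isCyclicMat_iff]
  refine and_congr_right fun _ => ⟨fun ⟨⟨h01, h12, h20⟩, hpar⟩ => ⟨h01, h12, h20, ?_⟩,
    fun h => ⟨⟨h.abs_x, h.abs_y, h.abs_z⟩, ?_⟩⟩
  · exact fun hx hy hz => (hcount hx hy hz).symm.trans (hpar ⟨hx, hy, hz⟩)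
  · exact fun ⟨hx, hy, hz⟩ => (hcount hx hy hz).trans (h.pos_iff hx hy hz)

theorem reflRealization_iff_triangle_from (hf : ∀ x y, f x y = f y x) (hB : Bᵀ = -B)
    (k : Fin 3) :
    ReflRealization f B v ↔ (∀ i, f (v i) (v i) = 2) ∧
      TriangleRealization (B k (k + 1)) (B (k + 1) (k + 2)) (B (k + 2) k)
        (f (v k) (v (k + 1))) (f (v (k + 1)) (v (k + 2))) (f (v (k + 2)) (v k)) := by
  rw [reflRealization_iff_triangle hf hB]
  fin_cases k
  · rfl
  · exact and_congr_right fun _ => TriangleRealization.rotate_iff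
  · exact and_congr_right fun _ => TriangleRealization.rotate_iff.trans
      TriangleRealization.rotate_iff

end Realization

section Mutation

variable {B : Matrix (Fin 3) (Fin 3) ℝ} {k i j : Fin 3}

theorem mutate_apply_self_left : mutate k B k j = -B k j := by
  simp [mutate]

theorem mutate_apply_self_right : mutate k B j k = -B j k := by
  simp [mutate]

theorem mutate_apply_of_ne (hi : i ≠ k) (hj : j ≠ k) :
    mutate k B i j = B i j + (|B i k| * B k j + B i k * |B k j|) / 2 := by
  simp [mutate, hi, hj]

theorem transpose_mutate (hB : Bᵀ = -B) (k : Fin 3) : (mutate k B)ᵀ = -mutate k B := by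
  have hB' := apply_swap_of_transpose_eq_neg hB
  ext i j
  rw [transpose_apply, Matrix.neg_apply]
  by_cases hik : i = k
  · rw [hik, mutate_apply_self_left, mutate_apply_self_right, hB' j k, neg_neg]
  by_cases hjk : j = k
  · rw [hjk, mutate_apply_self_left, mutate_apply_self_right, hB' k i, neg_neg]
  rw [mutate_apply_of_ne hik hjk, mutate_apply_of_ne hjk hik, hB' i j, hB' i k, hB' k j,
    abs_neg, abs_neg]
  ring

variable {V : Type*} [AddCommGroup V] [Module ℝ V] {f : V →ₗ[ℝ] V →ₗ[ℝ] ℝ}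
  {v : Fin 3 → V}

theorem mutateVecRefl_self : mutateVecRefl f B k v k = -v k := by
  simp [mutateVecRefl]

theorem mutateVecRefl_of_ne (hj : j ≠ k) :
    mutateVecRefl f B k v j = if 0 < B j k then v j - f (v j) (v k) • v k else v j := by
  simp [mutateVecRefl, hj]

theorem apply_mutateVecRefl_self_right (hk : f (v k) (v k) = 2) (hj : j ≠ k) :
    f (mutateVecRefl f B k v j) (mutateVecRefl f B k v k) =
      if 0 < B j k then f (v j) (v k) else -f (v j) (v k) := by
  rw [mutateVecRefl_self, mutateVecRefl_of_ne hj]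
  split_ifs
  · simp only [map_sub, map_smul, map_neg, LinearMap.sub_apply, LinearMap.smul_apply, hk,
      smul_eq_mul]
    ring
  · exact map_neg _ _

theorem apply_mutateVecRefl_of_ne (hf : ∀ x y, f x y = f y x) (hk : f (v k) (v k) = 2)
    (hi : i ≠ k) (hj : j ≠ k) :
    f (mutateVecRefl f B k v i) (mutateVecRefl f B k v j) =
      if (0 < B i k ↔ 0 < B j k) then f (v i) (v j)
      else f (v i) (v j) - f (v i) (v k) * f (v k) (v j) := by
  rw [mutateVecRefl_of_ne hi, mutateVecRefl_of_ne hj]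
  by_cases hik : 0 < B i k <;> by_cases hjk : 0 < B j k <;>
    simp only [hik, hjk, if_true, if_false, iff_true, iff_false, not_true_eq_false, map_sub,
      map_smul, LinearMap.sub_apply, LinearMap.smul_apply, smul_eq_mul, hk, hf (v j) (v k)] <;>
    ring

theorem apply_mutateVecRefl_diag (hf : ∀ x y, f x y = f y x) (hv : ∀ i, f (v i) (v i) = 2)
    (i : Fin 3) : f (mutateVecRefl f B k v i) (mutateVecRefl f B k v i) = 2 := by
  by_cases hi : i = k
  · simp [hi, mutateVecRefl_self, hv]
  · rw [apply_mutateVecRefl_of_ne hf (hv k) hi hi, if_pos Iff.rfl, hv]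

end Mutation

/-- Mutation of a realization by reflections is again a realization
by reflections of the mutated matrix. -/
theorem mutation_preserves_refl_realization
    {V : Type*} [AddCommGroup V] [Module ℝ V]
    (f : V →ₗ[ℝ] V →ₗ[ℝ] ℝ) (hf : ∀ x y, f x y = f y x)
    (B : Matrix (Fin 3) (Fin 3) ℝ) (hB : Bᵀ = -B)
    (v : Fin 3 → V) (hv : ReflRealization f B v) (k : Fin 3) :
    ReflRealization f (mutate k B) (mutateVecRefl f B k v) := by
  obtain ⟨hnorm, htri⟩ := (reflRealization_iff_triangle_from hf hB k).mp hv
  refine (reflRealization_iff_triangle_from hf (transpose_mutate hB k) k).mpr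
    ⟨apply_mutateVecRefl_diag hf hnorm, ?_⟩
  have hi : k + 1 ≠ k := by fin_cases k <;> decide
  have hj : k + 2 ≠ k := by fin_cases k <;> decide
  have hB' := apply_swap_of_transpose_eq_neg hB
  rw [mutate_apply_self_left, mutate_apply_of_ne hi hj, mutate_apply_self_right,
    hf (mutateVecRefl f B k v k), apply_mutateVecRefl_self_right (hnorm k) hi,
    apply_mutateVecRefl_of_ne hf (hnorm k) hi hj, apply_mutateVecRefl_self_right (hnorm k) hj,
    hB' k (k + 1), hB' (k + 2) k, hf (v (k + 1)) (v k), hf (v k) (v (k + 2))]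
  simp only [neg_pos, abs_neg]
  convert htri.mutate using 2
  ring
end
end

section
/- Let B be a cyclic real skew-symmetric 3×3 matrix with weights p = |b_12|, q = |b_23|, r = |b_31|, all positive. If r < 2 (i.e. some weight is smaller than 2), then B is mutation-acyclic: some matrix in its mutation class is acyclic. -/
open Matrix
noncomputable section

/-!
If every matrix in the class of `B` with weights `p, q, r > 0` were cyclic, then mutating at `2`
and relabelling would replace the weights `(p, q, r)` by `(q, r q - p, r)` forever, with all
weights staying positive. The weights along this orbit satisfy `u (n + 2) = r u (n + 1) - u n`,
whose second differences `(r - 2) u (n + 1)` are negative. A positive concave sequence must be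
nondecreasing, but then its second differences stay below `(r - 2) u 0 < 0`, which is impossible.
-/

theorem exists_neg_of_le_sub {u : ℕ → ℝ} {ε : ℝ} (hε : 0 < ε) (h : ∀ n, u (n + 1) ≤ u n - ε) :
    ∃ n, u n < 0 := by
  have hlin : ∀ n : ℕ, u n ≤ u 0 - n * ε := by
    intro n
    induction n with
    | zero => simp
    | succ n ih => push_cast; linarith [h n]
  obtain ⟨n, hn⟩ := exists_nat_gt (u 0 / ε)
  refine ⟨n, (hlin n).trans_lt ?_⟩
  rw [div_lt_iff₀ hε] at hn
  linarith

theorem exists_nonpos_of_recurrence_of_lt_two {u : ℕ → ℝ} {r : ℝ} (hr : r < 2)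
    (hu : ∀ n, u (n + 2) = r * u (n + 1) - u n) : ∃ n, u n ≤ 0 := by
  by_contra! hpos
  set d : ℕ → ℝ := fun n => u (n + 1) - u n with hd_def
  have hd : ∀ n, d (n + 1) = d n - (2 - r) * u (n + 1) := fun n => by
    simp only [hd_def, hu]; ring
  have hd_anti : Antitone d :=
    antitone_nat_of_succ_le fun n => by nlinarith [hd n, hpos (n + 1)]
  by_cases hneg : ∃ N, d N < 0
  · obtain ⟨N, hN⟩ := hneg
    have hstep (k : ℕ) : u (N + (k + 1)) ≤ u (N + k) - -d N := by
      have : u (N + k + 1) - u (N + k) ≤ d N := hd_anti (Nat.le_add_right N k)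
      rw [← add_assoc]
      linarith
    obtain ⟨k, hk⟩ := exists_neg_of_le_sub (u := fun k => u (N + k)) (neg_pos.2 hN) hstep
    exact (hpos (N + k)).not_gt hk
  · push Not at hneg
    have hu_mono : Monotone u := monotone_nat_of_le_succ fun n => by linarith [hneg n]
    have hstep (n : ℕ) : d (n + 1) ≤ d n - (2 - r) * u 0 := by
      nlinarith [hd n, hu_mono (Nat.zero_le (n + 1))]
    obtain ⟨k, hk⟩ := exists_neg_of_le_sub (mul_pos (sub_pos.2 hr) (hpos 0)) hstep
    exact (hneg k).not_gt hk

def skewMatrix (a b c : ℝ) : Matrix (Fin 3) (Fin 3) ℝ := !![0, a, -c; -a, 0, b; c, -b, 0]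

theorem eq_skewMatrix_of_transpose_eq_neg {B : Matrix (Fin 3) (Fin 3) ℝ} (hB : Bᵀ = -B) :
    B = skewMatrix (B 0 1) (B 1 2) (B 2 0) := by
  have h : ∀ i j, B j i = -B i j := fun i j => by
    simpa using congrFun (congrFun hB i) j
  ext i j
  fin_cases i <;> fin_cases j <;> simp [skewMatrix] <;>
    linarith [h 0 0, h 1 1, h 2 2, h 0 1, h 1 2, h 2 0]

theorem isCyclicMat_skewMatrix_iff (a b c : ℝ) :
    IsCyclicMat (skewMatrix a b c) ↔ (0 < a ∧ 0 < b ∧ 0 < c) ∨ (a < 0 ∧ b < 0 ∧ c < 0) := by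
  simp [IsCyclicMat, skewMatrix]

theorem mutate_two_skewMatrix (a : ℝ) {b c : ℝ} (hb : 0 ≤ b) (hc : 0 ≤ c) :
    mutate 2 (skewMatrix a b c) = skewMatrix (a - b * c) (-b) (-c) := by
  ext i j
  fin_cases i <;> fin_cases j <;> simp [mutate, skewMatrix, abs_of_nonneg, hb, hc] <;> ring

theorem mutationStep_skewMatrix_neg (a b c : ℝ) :
    MutationStep (skewMatrix a b c) (skewMatrix (-b) (-a) (-c)) := by
  refine Or.inr ⟨Equiv.swap 0 2, ?_⟩
  ext i j
  fin_cases i <;> fin_cases j <;> simp [skewMatrix, Equiv.swap_apply_of_ne_of_ne]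

theorem not_isMutationAcyclic_iff {B : Matrix (Fin 3) (Fin 3) ℝ} :
    ¬ IsMutationAcyclic B ↔ IsMutationCyclic B := by
  simp [IsMutationAcyclic, IsMutationCyclic]

theorem IsMutationCyclic.of_mutationEquiv {B B' : Matrix (Fin 3) (Fin 3) ℝ}
    (hB : IsMutationCyclic B) (h : MutationEquiv B B') : IsMutationCyclic B' :=
  fun _ h' => hB _ (h.trans h')

theorem IsMutationCyclic.shift {p q r : ℝ} (h : IsMutationCyclic (skewMatrix p q r))
    (hq : 0 < q) (hr : 0 < r) :
    0 < r * q - p ∧ MutationEquiv (skewMatrix p q r) (skewMatrix q (r * q - p) r) := by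
  have hmut : MutationEquiv (skewMatrix p q r) (skewMatrix (p - q * r) (-q) (-r)) :=
    .single (Or.inl ⟨2, (mutate_two_skewMatrix p hq.le hr.le).symm⟩)
  have hcyc := (isCyclicMat_skewMatrix_iff _ _ _).1 (h _ hmut)
  refine ⟨?_, hmut.tail ?_⟩
  · rcases hcyc with ⟨-, hq', -⟩ | ⟨hp', -, -⟩ <;> linarith
  · convert mutationStep_skewMatrix_neg (p - q * r) (-q) (-r) using 2 <;> ring

def weightSeq (r p q : ℝ) : ℕ → ℝ
  | 0 => p
  | 1 => q
  | n + 2 => r * weightSeq r p q (n + 1) - weightSeq r p q n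

theorem isMutationAcyclic_skewMatrix {p q r : ℝ} (hp : 0 < p) (hq : 0 < q) (hr : 0 < r)
    (hr2 : r < 2) : IsMutationAcyclic (skewMatrix p q r) := by
  by_contra hB
  rw [not_isMutationAcyclic_iff] at hB
  set u := weightSeq r p q
  have horbit : ∀ n, 0 < u (n + 1) ∧ IsMutationCyclic (skewMatrix (u n) (u (n + 1)) r) := by
    intro n
    induction n with
    | zero => exact ⟨hq, hB⟩
    | succ n ih =>
      obtain ⟨hpos, hequiv⟩ := ih.2.shift ih.1 hr
      exact ⟨hpos, ih.2.of_mutationEquiv hequiv⟩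
  obtain ⟨n, hn⟩ := exists_nonpos_of_recurrence_of_lt_two hr2 (u := u) fun _ => rfl
  cases n with
  | zero => exact hn.not_gt hp
  | succ n => exact hn.not_gt (horbit n).1

theorem mutation_acyclic_of_weight_lt_two_general
    (B : Matrix (Fin 3) (Fin 3) ℝ) (hB : Bᵀ = -B) (hcyc : IsCyclicMat B)
    (hr2 : |B 2 0| < 2) :
    IsMutationAcyclic B := by
  rw [eq_skewMatrix_of_transpose_eq_neg hB] at hcyc ⊢
  rcases (isCyclicMat_skewMatrix_iff _ _ _).1 hcyc with ⟨hp, hq, hr⟩ | ⟨hp, hq, hr⟩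
  · exact isMutationAcyclic_skewMatrix hp hq hr (by rwa [abs_of_pos hr] at hr2)
  · obtain ⟨B', hB', hacyc⟩ := isMutationAcyclic_skewMatrix (neg_pos.2 hq) (neg_pos.2 hp)
      (neg_pos.2 hr) (by rwa [abs_of_neg hr] at hr2)
    exact ⟨B', .head (mutationStep_skewMatrix_neg _ _ _) hB', hacyc⟩

/-- a cyclic matrix with positive weights, one of which is smaller
than 2, is mutation-acyclic. -/
theorem mutation_acyclic_of_weight_lt_two
    (B : Matrix (Fin 3) (Fin 3) ℝ) (hB : Bᵀ = -B) (hcyc : IsCyclicMat B)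
    (hp : 0 < |B 0 1|) (hq : 0 < |B 1 2|) (hr : 0 < |B 2 0|)
    (hr2 : |B 2 0| < 2) :
    IsMutationAcyclic B :=
  mutation_acyclic_of_weight_lt_two_general B hB hcyc hr2
end
end

section
/- Let B be a cyclic real skew-symmetric 3×3 matrix with weights p = |b_12|, q = |b_23|, r = |b_31|, all positive. If r = 2 and p ≠ q, then B is mutation-acyclic: some matrix in its mutation class is acyclic. -/
/-!
Write a cyclic matrix as having weights `(a, b, 2)` in the positions `(b₁₂, b₂₃, b₃₁)`, with
`0 < a < b`. Mutation at the vertex carrying the arrows of weights `a` and `2` replaces `b` by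
`2a - b` and reverses the orientation. Up to the symmetries `B ↦ -B` and `a ↔ b`, each such step
keeps `|a - b|` and lowers `a + b` by `2|a - b|`, so some weight eventually becomes nonpositive,
which makes the matrix acyclic.
-/

open Matrix
noncomputable section

def skewMat (a b c : ℝ) : Matrix (Fin 3) (Fin 3) ℝ := !![0, a, -c; -a, 0, b; c, -b, 0]

theorem eq_skewMat_of_transpose_eq_neg {B : Matrix (Fin 3) (Fin 3) ℝ} (hB : Bᵀ = -B) :
    B = skewMat (B 0 1) (B 1 2) (B 2 0) := by
  have h : ∀ i j, B j i = -B i j := fun i j => congrFun (congrFun hB i) j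
  ext i j
  fin_cases i <;> fin_cases j <;> simp [skewMat] <;>
    linarith [h 0 0, h 1 1, h 2 2, h 0 1, h 1 2, h 2 0]

theorem neg_skewMat (a b c : ℝ) : -skewMat a b c = skewMat (-a) (-b) (-c) := by
  ext i j
  fin_cases i <;> fin_cases j <;> simp [skewMat]

theorem isCyclicMat_skewMat {a b c : ℝ} :
    IsCyclicMat (skewMat a b c) ↔ (0 < a ∧ 0 < b ∧ 0 < c) ∨ (a < 0 ∧ b < 0 ∧ c < 0) :=
  Iff.rfl

theorem pos_of_isCyclicMat_skewMat_two {a b : ℝ} (h : IsCyclicMat (skewMat a b 2)) :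
    0 < a ∧ 0 < b := by
  rcases isCyclicMat_skewMat.mp h with ⟨ha, hb, -⟩ | ⟨-, -, h2⟩
  · exact ⟨ha, hb⟩
  · norm_num at h2

theorem mutate_zero_skewMat_two {a : ℝ} (ha : 0 < a) (b : ℝ) :
    mutate 0 (skewMat a b 2) = -skewMat a (2 * a - b) 2 := by
  ext i j
  fin_cases i <;> fin_cases j <;> simp [mutate, skewMat, abs_of_pos ha] <;> ring

theorem permute_swap_skewMat (a b c : ℝ) :
    (Matrix.of fun i j => skewMat a b c (Equiv.swap 0 2 i) (Equiv.swap 0 2 j)) =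
      -skewMat b a c := by
  ext i j
  fin_cases i <;> fin_cases j <;> simp [skewMat, Equiv.swap_apply_def]

theorem mutate_neg (k : Fin 3) (B : Matrix (Fin 3) (Fin 3) ℝ) :
    mutate k (-B) = -mutate k B := by
  ext i j
  simp only [mutate, Matrix.of_apply, Matrix.neg_apply, abs_neg]
  split_ifs <;> ring

theorem isCyclicMat_neg {B : Matrix (Fin 3) (Fin 3) ℝ} : IsCyclicMat (-B) ↔ IsCyclicMat B := by
  simp only [IsCyclicMat, Matrix.neg_apply, neg_pos, neg_lt_zero]
  tauto

theorem MutationStep.neg {B B' : Matrix (Fin 3) (Fin 3) ℝ} (h : MutationStep B B') :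
    MutationStep (-B) (-B') := by
  rcases h with ⟨k, rfl⟩ | ⟨σ, rfl⟩
  · exact Or.inl ⟨k, (mutate_neg k B).symm⟩
  · exact Or.inr ⟨σ, by ext i j; simp⟩

theorem MutationEquiv.neg {B B' : Matrix (Fin 3) (Fin 3) ℝ} (h : MutationEquiv B B') :
    MutationEquiv (-B) (-B') :=
  Relation.ReflTransGen.lift (fun C => -C) (fun _ _ => MutationStep.neg) _ _ h

section IsMutationAcyclic

variable {B B' : Matrix (Fin 3) (Fin 3) ℝ}

theorem isMutationAcyclic_of_not_isCyclicMat (h : ¬IsCyclicMat B) : IsMutationAcyclic B :=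
  ⟨B, .refl, h⟩

theorem IsMutationAcyclic.neg (h : IsMutationAcyclic B) : IsMutationAcyclic (-B) := by
  obtain ⟨C, hC, hacyc⟩ := h
  exact ⟨-C, hC.neg, by rwa [isCyclicMat_neg]⟩

theorem IsMutationAcyclic.of_mutationStep (hstep : MutationStep B B')
    (h : IsMutationAcyclic B') : IsMutationAcyclic B := by
  obtain ⟨C, hC, hacyc⟩ := h
  exact ⟨C, .head hstep hC, hacyc⟩

end IsMutationAcyclic

theorem IsMutationAcyclic.of_skewMat_swap {a b c : ℝ} (h : IsMutationAcyclic (skewMat b a c)) :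
    IsMutationAcyclic (skewMat a b c) := by
  refine .of_mutationStep (Or.inr ⟨Equiv.swap 0 2, rfl⟩) ?_
  rw [permute_swap_skewMat]
  exact h.neg

theorem isMutationAcyclic_skewMat_two_of_add_le (n : ℕ) :
    ∀ a b : ℝ, a + b ≤ n * |a - b| → IsMutationAcyclic (skewMat a b 2) := by
  induction n with
  | zero =>
    intro a b h
    refine isMutationAcyclic_of_not_isCyclicMat fun hcyc => ?_
    obtain ⟨ha, hb⟩ := pos_of_isCyclicMat_skewMat_two hcyc
    rw [Nat.cast_zero, zero_mul] at h
    linarith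
  | succ n ih =>
    intro a b h
    wlog hab : a ≤ b generalizing a b
    · exact .of_skewMat_swap (this b a (by rwa [add_comm, abs_sub_comm]) (by linarith))
    by_cases hcyc : IsCyclicMat (skewMat a b 2)
    swap
    · exact isMutationAcyclic_of_not_isCyclicMat hcyc
    obtain ⟨ha, -⟩ := pos_of_isCyclicMat_skewMat_two hcyc
    refine .of_mutationStep (Or.inl ⟨0, rfl⟩) ?_
    rw [mutate_zero_skewMat_two ha]
    refine (ih a (2 * a - b) ?_).neg
    have hdist : |a - (2 * a - b)| = b - a := by
      rw [show a - (2 * a - b) = b - a by ring, abs_of_nonneg (by linarith)]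
    rw [hdist]
    rw [abs_of_nonpos (by linarith), Nat.cast_succ] at h
    linarith

theorem isMutationAcyclic_skewMat_two {a b : ℝ} (hab : a ≠ b) :
    IsMutationAcyclic (skewMat a b 2) := by
  have hdist : 0 < |a - b| := abs_pos.mpr (sub_ne_zero.mpr hab)
  obtain ⟨n, hn⟩ := exists_nat_ge ((a + b) / |a - b|)
  exact isMutationAcyclic_skewMat_two_of_add_le n a b ((div_le_iff₀ hdist).mp hn)

theorem mutation_acyclic_of_weight_eq_two_ne_general
    (B : Matrix (Fin 3) (Fin 3) ℝ) (hB : Bᵀ = -B) (hcyc : IsCyclicMat B)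
    (hr2 : |B 2 0| = 2) (hpq : |B 0 1| ≠ |B 1 2|) :
    IsMutationAcyclic B := by
  rw [eq_skewMat_of_transpose_eq_neg hB]
  rcases hcyc with ⟨h01, h12, h20⟩ | ⟨h01, h12, h20⟩
  · rw [abs_of_pos h01, abs_of_pos h12] at hpq
    rw [← abs_of_pos h20, hr2]
    exact isMutationAcyclic_skewMat_two hpq
  · rw [abs_of_neg h01, abs_of_neg h12] at hpq
    have h20' : B 2 0 = -2 := by linarith [abs_of_neg h20]
    have hneg := (isMutationAcyclic_skewMat_two hpq).neg
    rwa [neg_skewMat, neg_neg, neg_neg, ← h20'] at hneg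

/-- a cyclic matrix with positive weights `p, q, r` with `r = 2` and
`p ≠ q` is mutation-acyclic. -/
theorem mutation_acyclic_of_weight_eq_two_ne
    (B : Matrix (Fin 3) (Fin 3) ℝ) (hB : Bᵀ = -B) (hcyc : IsCyclicMat B)
    (hp : 0 < |B 0 1|) (hq : 0 < |B 1 2|) (hr : 0 < |B 2 0|)
    (hr2 : |B 2 0| = 2) (hpq : |B 0 1| ≠ |B 1 2|) :
    IsMutationAcyclic B :=
  mutation_acyclic_of_weight_eq_two_ne_general B hB hcyc hr2 hpq
end
end

section
/- Let ℝ^{2,1} denote ℝ³ with the Lorentzian symmetric bilinear form ⟨x,y⟩ = x_1y_1 + x_2y_2 − x_3y_3. Let B be a cyclic real skew-symmetric 3×3 matrix with weights p = |b_12|, q = |b_23|, r = |b_31|. If there exist vectors v_1, v_2, v_3 ∈ ℝ^{2,1} with ⟨v_i,v_i⟩ = −2 for i = 1,2,3 and ⟨v_1,v_2⟩ = −p, ⟨v_2,v_3⟩ = −q, ⟨v_3,v_1⟩ = −r (a realization of B by π-rotations), then B is mutation-cyclic. Equivalently, a mutation-acyclic matrix admits no realization by π-rotations. -/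
open Matrix
noncomputable section

/-!
The Lorentzian Gram matrix of a realization has −2 on the diagonal and −p, −q, −r off it.
Reverse Cauchy–Schwarz for timelike vectors gives p, q, r ≥ 2, and the Gram determinant,
being −det(v)² ≤ 0, gives p² + q² + r² − pqr ≤ 4. A mutation of a cyclic matrix negates it
and replaces one weight x by yz − x, the other root of the Markov quadric in x. Both
conditions survive this Vieta move, so the whole mutation class stays cyclic.
-/
/-- For a cyclic matrix with weights `x, y, z` the last condition is `C(B) ≤ 4`. -/
def MarkovBounded (x y z : ℝ) : Prop :=
  2 ≤ x ∧ 2 ≤ y ∧ 2 ≤ z ∧ x ^ 2 + y ^ 2 + z ^ 2 ≤ x * y * z + 4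

namespace MarkovBounded

variable {x y z : ℝ}

theorem rotate (h : MarkovBounded x y z) : MarkovBounded y z x := by
  obtain ⟨hx, hy, hz, hC⟩ := h
  exact ⟨hy, hz, hx, by linarith [mul_rotate x y z]⟩

theorem swap (h : MarkovBounded x y z) : MarkovBounded y x z := by
  obtain ⟨hx, hy, hz, hC⟩ := h
  exact ⟨hy, hx, hz, by linarith [mul_comm x y]⟩

theorem vieta (h : MarkovBounded x y z) : MarkovBounded (y * z - x) y z := by
  obtain ⟨hx, hy, hz, hC⟩ := h
  -- The right side is the value at `2` of `t² - y z t + x (y z - x)`, with roots `x`, `y z - x`.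
  have hroots : (y - z) ^ 2 ≤ (x - 2) * (y * z - x - 2) := by nlinarith
  refine ⟨?_, hy, hz, by nlinarith⟩
  rcases hx.lt_or_eq with hx | rfl
  · nlinarith [sq_nonneg (y - z)]
  · nlinarith

end MarkovBounded

def skewOf (x y z : ℝ) : Matrix (Fin 3) (Fin 3) ℝ :=
  !![0, x, -z; -x, 0, y; z, -y, 0]

theorem eq_skewOf {B : Matrix (Fin 3) (Fin 3) ℝ} (hB : Bᵀ = -B) :
    B = skewOf (B 0 1) (B 1 2) (B 2 0) := by
  have h i j : B j i = -B i j := congrFun (congrFun hB i) j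
  have h0 : B 0 0 = 0 := by linarith [h 0 0]
  have h1 : B 1 1 = 0 := by linarith [h 1 1]
  have h2 : B 2 2 = 0 := by linarith [h 2 2]
  ext i j
  fin_cases i <;> fin_cases j <;> simp [skewOf, h0, h1, h2, h 0 1, h 1 2, h 2 0]

theorem skewOf_neg (x y z : ℝ) : skewOf (-x) (-y) (-z) = -skewOf x y z := by
  ext i j
  fin_cases i <;> fin_cases j <;> simp [skewOf]

section skewOf

variable {x y z : ℝ}

theorem mutate_zero_skewOf (hx : 0 ≤ x) (hz : 0 ≤ z) :
    mutate 0 (skewOf x y z) = -skewOf x (z * x - y) z := by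
  ext i j
  fin_cases i <;> fin_cases j <;> simp [mutate, skewOf, abs_of_nonneg, hx, hz] <;> ring

theorem mutate_one_skewOf (hx : 0 ≤ x) (hy : 0 ≤ y) :
    mutate 1 (skewOf x y z) = -skewOf x y (x * y - z) := by
  ext i j
  fin_cases i <;> fin_cases j <;> simp [mutate, skewOf, abs_of_nonneg, hx, hy] <;> ring

theorem mutate_two_skewOf (hy : 0 ≤ y) (hz : 0 ≤ z) :
    mutate 2 (skewOf x y z) = -skewOf (y * z - x) y z := by
  ext i j
  fin_cases i <;> fin_cases j <;> simp [mutate, skewOf, abs_of_nonneg, hy, hz] <;> ring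

theorem skewOf_submatrix_swap_zero_one :
    (skewOf x y z).submatrix (Equiv.swap 0 1) (Equiv.swap 0 1) = -skewOf x z y := by
  ext i j
  fin_cases i <;> fin_cases j <;> simp [skewOf, Equiv.swap_apply_of_ne_of_ne]

theorem skewOf_submatrix_swap_one_two :
    (skewOf x y z).submatrix (Equiv.swap 1 2) (Equiv.swap 1 2) = -skewOf z y x := by
  ext i j
  fin_cases i <;> fin_cases j <;> simp [skewOf, Equiv.swap_apply_of_ne_of_ne]

end skewOf

def InCyclicRegion (B : Matrix (Fin 3) (Fin 3) ℝ) : Prop :=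
  ∃ x y z, MarkovBounded x y z ∧ (B = skewOf x y z ∨ B = -skewOf x y z)

namespace InCyclicRegion

variable {B : Matrix (Fin 3) (Fin 3) ℝ}

theorem isCyclicMat (h : InCyclicRegion B) : IsCyclicMat B := by
  obtain ⟨x, y, z, ⟨hx, hy, hz, -⟩, rfl | rfl⟩ := h
  · show (0 < x ∧ 0 < y ∧ 0 < z) ∨ _
    exact Or.inl ⟨by linarith, by linarith, by linarith⟩
  · show _ ∨ (-x < 0 ∧ -y < 0 ∧ -z < 0)
    exact Or.inr ⟨by linarith, by linarith, by linarith⟩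

theorem neg (h : InCyclicRegion B) : InCyclicRegion (-B) := by
  obtain ⟨x, y, z, hm, rfl | rfl⟩ := h
  exacts [⟨x, y, z, hm, Or.inr rfl⟩, ⟨x, y, z, hm, Or.inl (neg_neg _)⟩]

theorem map_of_map_neg {f : Matrix (Fin 3) (Fin 3) ℝ → Matrix (Fin 3) (Fin 3) ℝ}
    (hf : ∀ A, f (-A) = -f A)
    (hskew : ∀ x y z, MarkovBounded x y z → InCyclicRegion (f (skewOf x y z)))
    (h : InCyclicRegion B) : InCyclicRegion (f B) := by
  obtain ⟨x, y, z, hm, rfl | rfl⟩ := h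
  exacts [hskew x y z hm, hf _ ▸ (hskew x y z hm).neg]

theorem mutate (k : Fin 3) (h : InCyclicRegion B) : InCyclicRegion (mutate k B) := by
  refine map_of_map_neg (mutate_neg k) (fun x y z hm => ?_) h
  have ⟨hx, hy, hz, _⟩ := hm
  fin_cases k
  · exact ⟨_, _, _, hm.rotate.vieta.rotate.rotate,
      Or.inr (mutate_zero_skewOf (zero_le_two.trans hx) (zero_le_two.trans hz))⟩
  · exact ⟨_, _, _, hm.rotate.rotate.vieta.rotate,
      Or.inr (mutate_one_skewOf (zero_le_two.trans hx) (zero_le_two.trans hy))⟩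
  · exact ⟨_, _, _, hm.vieta,
      Or.inr (mutate_two_skewOf (zero_le_two.trans hy) (zero_le_two.trans hz))⟩

theorem submatrix (σ : Equiv.Perm (Fin 3)) (h : InCyclicRegion B) :
    InCyclicRegion (B.submatrix σ σ) := by
  have hσ : σ ∈ Submonoid.closure (Set.range fun i : Fin 2 => Equiv.swap i.castSucc i.succ) :=
    Equiv.Perm.mclosure_swap_castSucc_succ 2 ▸ Submonoid.mem_top σ
  induction hσ using Submonoid.closure_induction generalizing B with
  | mem τ hτ =>
    obtain ⟨i, rfl⟩ := hτ
    refine map_of_map_neg (f := fun A => A.submatrix _ _) (fun _ => rfl) (fun x y z hm => ?_) h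
    fin_cases i
    · exact ⟨x, z, y, hm.rotate.rotate.swap, Or.inr skewOf_submatrix_swap_zero_one⟩
    · exact ⟨z, y, x, hm.rotate.swap, Or.inr skewOf_submatrix_swap_one_two⟩
  | one => exact h
  | mul σ τ _ _ hσ hτ => exact hτ (hσ h)

theorem of_mutationEquiv {B' : Matrix (Fin 3) (Fin 3) ℝ} (h : InCyclicRegion B)
    (hBB' : MutationEquiv B B') : InCyclicRegion B' := by
  induction hBB' with
  | refl => exact h
  | tail _ hstep ih =>
    rcases hstep with ⟨k, rfl⟩ | ⟨σ, rfl⟩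
    exacts [ih.mutate k, ih.submatrix σ]

end InCyclicRegion

theorem lform_comm (u w : Fin 3 → ℝ) : lform u w = lform w u := by
  simp only [lform]
  ring

theorem lform_self_nonneg_of_orthogonal {u z : Fin 3 → ℝ} (hu : lform u u < 0)
    (hz : lform u z = 0) : 0 ≤ lform z z := by
  simp only [lform] at *
  have hu2 : 0 < u 2 ^ 2 := by nlinarith [sq_nonneg (u 0), sq_nonneg (u 1)]
  have hz2 : u 2 * z 2 = u 0 * z 0 + u 1 * z 1 := by linarith
  have : u 2 ^ 2 * (z 0 * z 0 + z 1 * z 1 - z 2 * z 2) =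
      -(u 0 * u 0 + u 1 * u 1 - u 2 * u 2) * (z 0 ^ 2 + z 1 ^ 2) + (u 0 * z 1 - u 1 * z 0) ^ 2 := by
    linear_combination (-(u 2 * z 2) - (u 0 * z 0 + u 1 * z 1)) * hz2
  nlinarith [sq_nonneg (z 0), sq_nonneg (z 1), sq_nonneg (u 0 * z 1 - u 1 * z 0)]

theorem lform_mul_le_sq_of_timelike {u : Fin 3 → ℝ} (hu : lform u u < 0) (w : Fin 3 → ℝ) :
    lform u u * lform w w ≤ lform u w ^ 2 := by
  -- `z` is the component of `w` orthogonal to `u`, scaled by `lform u u`.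
  set z := lform u u • w - lform u w • u
  have hz : lform u z = 0 := by
    simp only [z, lform, Pi.sub_apply, Pi.smul_apply, smul_eq_mul]
    ring
  have hzz : lform z z = -lform u u * (lform u w ^ 2 - lform u u * lform w w) := by
    simp only [z, lform, Pi.sub_apply, Pi.smul_apply, smul_eq_mul]
    ring
  have := hzz ▸ lform_self_nonneg_of_orthogonal hu hz
  exact sub_nonneg.1 (nonneg_of_mul_nonneg_right this (neg_pos.2 hu))

def gramMatrix (v : Fin 3 → Fin 3 → ℝ) : Matrix (Fin 3) (Fin 3) ℝ :=
  of fun i j => lform (v i) (v j)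

theorem gramMatrix_eq (v : Fin 3 → Fin 3 → ℝ) :
    gramMatrix v = of v * diagonal ![1, 1, -1] * (of v)ᵀ := by
  ext i j
  simp [gramMatrix, lform, Matrix.mul_apply, Fin.sum_univ_three]
  ring

theorem det_gramMatrix_nonpos (v : Fin 3 → Fin 3 → ℝ) : (gramMatrix v).det ≤ 0 := by
  have hdiag : (diagonal ![(1 : ℝ), 1, -1]).det = -1 := by
    simp [det_diagonal, Fin.prod_univ_three]
  rw [gramMatrix_eq, det_mul, det_mul, det_transpose, hdiag]
  nlinarith [sq_nonneg (of v).det]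

namespace RotRealization

variable {B : Matrix (Fin 3) (Fin 3) ℝ} {v : Fin 3 → Fin 3 → ℝ}

theorem markovBounded (hv : RotRealization B v) : MarkovBounded |B 0 1| |B 1 2| |B 2 0| := by
  obtain ⟨hsq, h01, h12, h20⟩ := hv
  have two_le {i j : Fin 3} {b : ℝ} (hb : lform (v i) (v j) = -|b|) : 2 ≤ |b| := by
    have := lform_mul_le_sq_of_timelike (by linarith [hsq i]) (v j)
    rw [hsq, hsq, hb, neg_sq] at this
    nlinarith [abs_nonneg b]
  refine ⟨two_le h01, two_le h12, two_le h20, ?_⟩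
  have hdet := det_gramMatrix_nonpos v
  simp only [det_fin_three, gramMatrix, of_apply, hsq, h01, h12, h20, lform_comm (v 1) (v 0),
    lform_comm (v 2) (v 1), lform_comm (v 0) (v 2)] at hdet
  linarith

theorem inCyclicRegion (hB : Bᵀ = -B) (hcyc : IsCyclicMat B) (hv : RotRealization B v) :
    InCyclicRegion B := by
  refine ⟨_, _, _, hv.markovBounded, ?_⟩
  rw [← skewOf_neg]
  rcases hcyc with ⟨h01, h12, h20⟩ | ⟨h01, h12, h20⟩
  · left
    rw [abs_of_pos h01, abs_of_pos h12, abs_of_pos h20]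
    exact eq_skewOf hB
  · right
    rw [abs_of_neg h01, abs_of_neg h12, abs_of_neg h20, neg_neg, neg_neg, neg_neg]
    exact eq_skewOf hB

end RotRealization

/-- a cyclic matrix admitting a realization by π-rotations is
mutation-cyclic (equivalently, a mutation-acyclic matrix admits no realization
by π-rotations). -/
theorem mutation_cyclic_of_rot_realization
    (B : Matrix (Fin 3) (Fin 3) ℝ) (hB : Bᵀ = -B) (hcyc : IsCyclicMat B)
    (h : ∃ v : Fin 3 → (Fin 3 → ℝ), RotRealization B v) :
    IsMutationCyclic B := by
  obtain ⟨v, hv⟩ := h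
  intro B' hBB'
  exact ((hv.inCyclicRegion hB hcyc).of_mutationEquiv hBB').isCyclicMat
end
end

section
/- Let B be a mutation-cyclic real skew-symmetric 3×3 matrix, with weights p = |b_12|, q = |b_23|, r = |b_31|. Then C(B) = p² + q² + r² − pqr ≤ 4, and B admits a realization by π-rotations: letting ℝ^{2,1} denote ℝ³ with the Lorentzian symmetric bilinear form ⟨x,y⟩ = x_1y_1 + x_2y_2 − x_3y_3, there exist vectors v_1, v_2, v_3 ∈ ℝ^{2,1} with ⟨v_i,v_i⟩ = −2 for i = 1,2,3 and ⟨v_1,v_2⟩ = −p, ⟨v_2,v_3⟩ = −q, ⟨v_3,v_1⟩ = −r. -/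
/-
The weights of the matrices in the mutation class of a cyclic `B` with positive weights
`(a, b, c)` are the positive triples reachable by rotations and the Vieta involution
`c ↦ ab - c`, which preserves `a² + b² + c² - abc`. If some weight `a` were below `2`,
iterating the involution with `a` fixed would give a positive solution of
`x (n+2) = a x (n+1) - x n`, which is strictly concave and hence eventually negative.
If all weights are at least `2` but `C = a² + b² + c² - abc > 4`, replacing the largest
weight `c` by `ab - c` lowers `a + b + c` by `2c - ab ≥ 2 √(C - 4)`, an impossible
infinite descent. Finally `C ≤ 4` is exactly the condition making the Gram matrix with
diagonal `-2` and off-diagonal entries `-p, -q, -r` realizable in `ℝ^{2,1}`.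
-/

open Matrix
noncomputable section

theorem Set.eq_empty_of_forall_exists_le_sub {α : Type*} {S : Set α} {f : α → ℝ} {ε : ℝ}
    (hε : 0 < ε) (hbdd : BddBelow (f '' S)) (hstep : ∀ x ∈ S, ∃ y ∈ S, f y ≤ f x - ε) :
    S = ∅ := by
  obtain ⟨m, hm⟩ := hbdd
  have hge : ∀ n : ℕ, ∀ x ∈ S, m + n * ε ≤ f x := by
    intro n
    induction n with
    | zero => simpa using fun x hx => hm (Set.mem_image_of_mem f hx)
    | succ n ih =>
      intro x hx
      obtain ⟨y, hy, hyx⟩ := hstep x hx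
      push_cast
      linarith [ih y hy]
  refine Set.eq_empty_of_forall_notMem fun x hx => ?_
  obtain ⟨n, hn⟩ := exists_nat_gt ((f x - m) / ε)
  rw [div_lt_iff₀ hε] at hn
  linarith [hge n x hx]

theorem not_bddBelow_range_of_forall_le_sub {x : ℕ → ℝ} {ε : ℝ} (hε : 0 < ε)
    (h : ∀ n, x (n + 1) ≤ x n - ε) : ¬ BddBelow (Set.range x) := fun hbdd =>
  Set.univ_nonempty.ne_empty <| Set.eq_empty_of_forall_exists_le_sub hε
    (by rwa [Set.image_univ]) fun n _ => ⟨n + 1, trivial, h n⟩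

theorem two_le_of_forall_pos_of_recurrence {x : ℕ → ℝ} {a : ℝ} (hpos : ∀ n, 0 < x n)
    (hrec : ∀ n, x (n + 2) = a * x (n + 1) - x n) : 2 ≤ a := by
  by_contra! ha
  -- The differences `d` decrease; if one is negative, `x` eventually is too, and otherwise `x`
  -- increases and `d` drops by at least `(2 - a) * x 0` at each step.
  have hbdd : ∀ y : ℕ → ℝ, (∀ n, 0 ≤ y n) → BddBelow (Set.range y) :=
    fun y hy => ⟨0, Set.forall_mem_range.2 hy⟩
  set d : ℕ → ℝ := fun n => x (n + 1) - x n
  have hd : ∀ n, d (n + 1) = d n - (2 - a) * x (n + 1) := fun n => by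
    simp only [d, hrec]; ring
  have hanti : Antitone d := antitone_nat_of_succ_le fun n => by
    nlinarith [hd n, hpos (n + 1)]
  by_cases hneg : ∃ k, d k < 0
  · obtain ⟨k, hk⟩ := hneg
    refine not_bddBelow_range_of_forall_le_sub (x := fun m => x (k + m)) (neg_pos.2 hk)
      (fun m => ?_) (hbdd _ fun m => (hpos _).le)
    have : d (k + m) ≤ d k := hanti (Nat.le_add_right k m)
    simp only [d, ← add_assoc] at this ⊢
    linarith
  · push Not at hneg
    have hmono : Monotone x := monotone_nat_of_le_succ fun n => by linarith [hneg n]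
    refine not_bddBelow_range_of_forall_le_sub (x := d) (mul_pos (sub_pos.2 ha) (hpos 0))
      (fun n => ?_) (hbdd d hneg)
    nlinarith [hd n, hmono (Nat.zero_le (n + 1))]

def markovForm (a b c : ℝ) : ℝ := a ^ 2 + b ^ 2 + c ^ 2 - a * b * c

theorem markovForm_rotate (a b c : ℝ) : markovForm b c a = markovForm a b c := by
  unfold markovForm; ring

theorem markovForm_swap (a b c : ℝ) : markovForm a c b = markovForm a b c := by
  unfold markovForm; ring

theorem markovForm_vieta (a b c : ℝ) : markovForm a (a * b - c) b = markovForm a b c := by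
  unfold markovForm; ring

theorem sqrt_le_two_mul_sub_of_max {a b c : ℝ} (ha : 2 ≤ a) (hb : 2 ≤ b) (hac : a ≤ c)
    (hbc : b ≤ c) (hC : 4 < markovForm a b c) :
    √(4 * (markovForm a b c - 4)) ≤ 2 * c - a * b := by
  unfold markovForm at *
  have hlt : a * b < 2 * c := by
    by_contra! hle
    rcases le_total a b with h | h <;>
      nlinarith [mul_nonneg (sub_nonneg.2 hac) (sub_nonneg.2 hle)]
  have hsq : (2 * c - a * b) ^ 2 =
      (a ^ 2 - 4) * (b ^ 2 - 4) + 4 * (a ^ 2 + b ^ 2 + c ^ 2 - a * b * c - 4) := by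
    ring
  rw [Real.sqrt_le_left (by linarith), hsq]
  nlinarith [mul_nonneg (by nlinarith : (0 : ℝ) ≤ a ^ 2 - 4) (by nlinarith : (0 : ℝ) ≤ b ^ 2 - 4)]

structure IsVietaClosed (P : ℝ → ℝ → ℝ → Prop) : Prop where
  pos {a b c : ℝ} : P a b c → 0 < a
  rotate {a b c : ℝ} : P a b c → P b c a
  vieta {a b c : ℝ} : P a b c → P a (a * b - c) b

def vietaSeq (a b c : ℝ) : ℕ → ℝ
  | 0 => c
  | 1 => b
  | n + 2 => a * vietaSeq a b c (n + 1) - vietaSeq a b c n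

namespace IsVietaClosed

variable {P : ℝ → ℝ → ℝ → Prop} {a b c : ℝ}

theorem apply_vietaSeq (hP : IsVietaClosed P) (h : P a b c) (n : ℕ) :
    P a (vietaSeq a b c (n + 1)) (vietaSeq a b c n) := by
  induction n with
  | zero => exact h
  | succ n ih => exact hP.vieta ih

theorem two_le (hP : IsVietaClosed P) (h : P a b c) : 2 ≤ a :=
  two_le_of_forall_pos_of_recurrence (x := vietaSeq a b c)
    (fun n => hP.pos (hP.rotate (hP.rotate (hP.apply_vietaSeq h n)))) fun _ => rfl

theorem exists_sum_le_sub (hP : IsVietaClosed P) (h : P a b c) (hC : 4 < markovForm a b c) :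
    ∃ a' b' c', P a' b' c' ∧ markovForm a' b' c' = markovForm a b c ∧
      a' + b' + c' ≤ a + b + c - √(4 * (markovForm a b c - 4)) := by
  have of_max : ∀ {x y z}, P x y z → x ≤ z → y ≤ z → markovForm x y z = markovForm a b c →
      x + y + z = a + b + c → ∃ a' b' c', P a' b' c' ∧ markovForm a' b' c' = markovForm a b c ∧
        a' + b' + c' ≤ a + b + c - √(4 * (markovForm a b c - 4)) := by
    intro x y z hxyz hxz hyz hm hs
    have hgap := sqrt_le_two_mul_sub_of_max (hP.two_le hxyz) (hP.two_le (hP.rotate hxyz)) hxz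
      hyz (hm ▸ hC)
    refine ⟨x, x * y - z, y, hP.vieta hxyz, (markovForm_vieta x y z).trans hm, ?_⟩
    rw [hm] at hgap
    linarith
  have hbca := markovForm_rotate a b c
  have hcab := (markovForm_rotate c a b).symm
  rcases le_total a c with hac | hca <;> rcases le_total b c with hbc | hcb <;>
    rcases le_total a b with hab | hba
  all_goals first
    | exact of_max h (by linarith) (by linarith) rfl rfl
    | exact of_max (hP.rotate h) (by linarith) (by linarith) hbca (by ring)
    | exact of_max (hP.rotate (hP.rotate h)) (by linarith) (by linarith) hcab (by ring)

theorem markovForm_le_four (hP : IsVietaClosed P) (h : P a b c) : markovForm a b c ≤ 4 := by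
  by_contra! hC
  let S : Set (ℝ × ℝ × ℝ) :=
    {t | P t.1 t.2.1 t.2.2 ∧ markovForm t.1 t.2.1 t.2.2 = markovForm a b c}
  have hS : S = ∅ := by
    refine Set.eq_empty_of_forall_exists_le_sub (f := fun t => t.1 + t.2.1 + t.2.2)
      (Real.sqrt_pos.2 (by linarith : 0 < 4 * (markovForm a b c - 4))) ⟨0, ?_⟩ ?_
    · rintro _ ⟨⟨x, y, z⟩, ⟨hxyz, -⟩, rfl⟩
      have := hP.pos hxyz; have := hP.pos (hP.rotate hxyz)
      have := hP.pos (hP.rotate (hP.rotate hxyz))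
      dsimp only
      linarith
    · rintro ⟨x, y, z⟩ ⟨hxyz, hm⟩
      obtain ⟨x', y', z', h', hm', hs⟩ := hP.exists_sum_le_sub hxyz (hm ▸ hC)
      exact ⟨(x', y', z'), ⟨h', hm'.trans hm⟩, hm ▸ hs⟩
  exact Set.eq_empty_iff_forall_notMem.1 hS (a, b, c) ⟨h, rfl⟩

end IsVietaClosed

theorem exists_mul_eq_and_sq_le {α K R : ℝ} (hR : 0 ≤ R) (h : K ^ 2 ≤ α ^ 2 * R) :
    ∃ β, α * β = K ∧ β ^ 2 ≤ R := by
  rcases eq_or_ne α 0 with rfl | hα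
  · exact ⟨0, by nlinarith, by simpa using hR⟩
  · refine ⟨K / α, mul_div_cancel₀ K hα, ?_⟩
    rw [div_pow, div_le_iff₀ (by positivity)]
    linarith

theorem exists_lform_gram {p q r : ℝ} (hp : 4 ≤ p ^ 2) (hr : 4 ≤ r ^ 2)
    (hC : markovForm p q r ≤ 4) :
    ∃ v : Fin 3 → Fin 3 → ℝ, (∀ i, lform (v i) (v i) = -2) ∧
      lform (v 0) (v 1) = -p ∧ lform (v 1) (v 2) = -q ∧ lform (v 2) (v 0) = -r := by
  set t := √2
  have ht : t ^ 2 = 2 := Real.sq_sqrt zero_le_two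
  have ht0 : t ≠ 0 := by positivity
  set α := √((p ^ 2 - 4) / 2)
  have hα : α ^ 2 = (p ^ 2 - 4) / 2 := Real.sq_sqrt (by linarith)
  obtain ⟨β, hαβ, hβ⟩ := exists_mul_eq_and_sq_le (α := α) (K := (p * r - 2 * q) / 2)
    (R := (r ^ 2 - 4) / 2) (by linarith) (by unfold markovForm at hC; rw [hα]; nlinarith)
  set γ := √((r ^ 2 - 4) / 2 - β ^ 2)
  have hγ : γ ^ 2 = (r ^ 2 - 4) / 2 - β ^ 2 := Real.sq_sqrt (by linarith)
  refine ⟨![![0, 0, t], ![α, 0, p / t], ![β, γ, r / t]], fun i => ?_, ?_, ?_, ?_⟩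
  · fin_cases i <;> simp [lform] <;> field_simp <;> rw [ht] <;> linarith
  all_goals simp [lform]; field_simp
  rw [ht]; linarith

theorem mutate_one_skewMat {a b : ℝ} (c : ℝ) (ha : 0 < a) (hb : 0 < b) :
    mutate 1 (skewMat a b c) = skewMat (-a) (-b) (c - a * b) := by
  ext i j
  fin_cases i <;> fin_cases j <;> simp [mutate, skewMat, abs_of_pos, ha, hb] <;> ring

theorem mutationStep_skewMat_rotate (a b c : ℝ) :
    MutationStep (skewMat a b c) (skewMat b c a) := by
  refine Or.inr ⟨finRotate 3, ?_⟩
  ext i j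
  fin_cases i <;> fin_cases j <;> rfl

theorem mutationStep_skewMat_swap (a b c : ℝ) :
    MutationStep (skewMat a b c) (skewMat (-a) (-c) (-b)) := by
  refine Or.inr ⟨Equiv.swap 0 1, ?_⟩
  ext i j
  fin_cases i <;> fin_cases j <;> simp [skewMat, Equiv.swap_apply_def]

theorem IsMutationCyclic.of_mutationStep {B B' : Matrix (Fin 3) (Fin 3) ℝ}
    (h : IsMutationCyclic B) (e : MutationStep B B') : IsMutationCyclic B' :=
  fun _ e' => h _ (.head e e')

def IsPosMutationCyclic (a b c : ℝ) : Prop := 0 < a ∧ IsMutationCyclic (skewMat a b c)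

-- `vieta` is the mutation at vertex `2` followed by swapping the vertices `1` and `2`.
theorem isVietaClosed_isPosMutationCyclic : IsVietaClosed IsPosMutationCyclic := by
  have pos : ∀ {a b c}, IsPosMutationCyclic a b c → 0 < b ∧ 0 < c :=
    fun ⟨ha, h⟩ => (h _ .refl).elim (fun h => h.2) fun h => absurd h.1 ha.not_gt
  refine ⟨And.left, fun h => ⟨(pos h).1, h.2.of_mutationStep (mutationStep_skewMat_rotate ..)⟩,
    fun {a b c} h => ⟨h.1, ?_⟩⟩
  have h' := (h.2.of_mutationStep (.inl ⟨1, (mutate_one_skewMat c h.1 (pos h).1).symm⟩))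
    |>.of_mutationStep (mutationStep_skewMat_swap ..)
  simpa only [neg_neg, neg_sub] using h'

theorem IsMutationCyclic.isPosMutationCyclic_abs {a b c : ℝ}
    (h : IsMutationCyclic (skewMat a b c)) :
    IsPosMutationCyclic |a| |b| |c| ∨ IsPosMutationCyclic |a| |c| |b| := by
  obtain ⟨ha, hb, hc⟩ | ⟨ha, hb, hc⟩ : (0 < a ∧ 0 < b ∧ 0 < c) ∨ (a < 0 ∧ b < 0 ∧ c < 0) :=
    h _ .refl
  · left
    rw [abs_of_pos ha, abs_of_pos hb, abs_of_pos hc]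
    exact ⟨ha, h⟩
  · right
    rw [abs_of_neg ha, abs_of_neg hb, abs_of_neg hc]
    exact ⟨neg_pos.2 ha, h.of_mutationStep (mutationStep_skewMat_swap ..)⟩

/-- a mutation-cyclic matrix has Markov constant at most 4 and
admits a realization by π-rotations. -/
theorem mutation_cyclic_markov_le_four_and_rot_realization
    (B : Matrix (Fin 3) (Fin 3) ℝ) (hB : Bᵀ = -B) (h : IsMutationCyclic B) :
    |B 0 1| ^ 2 + |B 1 2| ^ 2 + |B 2 0| ^ 2 - |B 0 1| * |B 1 2| * |B 2 0| ≤ 4 ∧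
    ∃ v : Fin 3 → (Fin 3 → ℝ), RotRealization B v := by
  rw [eq_skewMat_of_transpose_eq_neg hB] at h
  have hP := isVietaClosed_isPosMutationCyclic
  obtain ⟨hp, hr, hC⟩ : 2 ≤ |B 0 1| ∧ 2 ≤ |B 2 0| ∧ markovForm |B 0 1| |B 1 2| |B 2 0| ≤ 4 := by
    rcases h.isPosMutationCyclic_abs with h | h
    · exact ⟨hP.two_le h, hP.two_le (hP.rotate (hP.rotate h)), hP.markovForm_le_four h⟩
    · exact ⟨hP.two_le h, hP.two_le (hP.rotate h), markovForm_swap .. ▸ hP.markovForm_le_four h⟩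
  exact ⟨hC, exists_lform_gram (by nlinarith) (by nlinarith) hC⟩
end
end

section
/- Let p, q, r be real numbers with 2 ≤ p ≤ q ≤ r, and let a, b, c ≥ 0 be the real numbers with cosh a = p/2, cosh b = q/2, cosh c = r/2. Set Δ = a + b − c and C = p² + q² + r² − pqr. Then: Δ > 0 if and only if C < 4; Δ = 0 if and only if C = 4; and Δ < 0 if and only if C > 4. -/
/-!
With `p = 2 cosh a` and `q = 2 cosh b`, the addition formulas give the factorisation
`4 - C = 4 (cosh (a + b) - cosh c) (cosh c - cosh (a - b))`. Since `cosh` is even and strictly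
increasing on `[0, ∞)`, the first factor has the sign of `a + b - c` and the second that of
`c - |a - b|`. When `r` is the largest weight, `c ≥ max a b ≥ |a - b|`, and `c = |a - b|` forces
`min a b = 0` and hence `a + b = c`; so the second factor never changes the sign of the product.
-/

open Real (cosh)

def markovConstant (p q r : ℝ) : ℝ := p ^ 2 + q ^ 2 + r ^ 2 - p * q * r

theorem sign_cosh_sub_cosh (x y : ℝ) :
    SignType.sign (cosh x - cosh y) = SignType.sign (|x| - |y|) := by
  rcases lt_trichotomy |x| |y| with h | h | h
  · rw [sign_neg (sub_neg.2 (Real.cosh_lt_cosh.2 h)), sign_neg (sub_neg.2 h)]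
  · rw [← Real.cosh_abs x, ← Real.cosh_abs y, h, sub_self, sub_self]
  · rw [sign_pos (sub_pos.2 (Real.cosh_lt_cosh.2 h)), sign_pos (sub_pos.2 h)]

theorem four_sub_markovConstant_two_cosh (a b c : ℝ) :
    4 - markovConstant (2 * cosh a) (2 * cosh b) (2 * cosh c)
      = 4 * ((cosh (a + b) - cosh c) * (cosh c - cosh (a - b))) := by
  rw [markovConstant, Real.cosh_add, Real.cosh_sub]
  linear_combination (4 * cosh b ^ 2 - 4) * Real.cosh_sq_sub_sinh_sq a
    + 4 * Real.sinh a ^ 2 * Real.cosh_sq_sub_sinh_sq b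

theorem sign_mul_eq_sign_left {x y : ℝ} (hy : 0 ≤ y) (hxy : y = 0 → x = 0) :
    SignType.sign (x * y) = SignType.sign x := by
  rcases hy.eq_or_lt with rfl | hy
  · simp [hxy rfl]
  · rw [sign_mul, sign_pos hy, mul_one]

theorem sign_add_sub_eq_sign_four_sub_markovConstant {a b c : ℝ} (ha : 0 ≤ a) (hb : 0 ≤ b)
    (hac : a ≤ c) (hbc : b ≤ c) :
    SignType.sign (a + b - c)
      = SignType.sign (4 - markovConstant (2 * cosh a) (2 * cosh b) (2 * cosh c)) := by
  rw [four_sub_markovConstant_two_cosh, sign_mul, sign_pos four_pos, one_mul, sign_mul,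
    sign_cosh_sub_cosh, sign_cosh_sub_cosh, abs_of_nonneg (add_nonneg ha hb),
    abs_of_nonneg (ha.trans hac), ← sign_mul]
  refine (sign_mul_eq_sign_left ?_ fun h => ?_).symm
  · exact sub_nonneg.2 (abs_sub_le_iff.2 ⟨by linarith, by linarith⟩)
  · cases abs_cases (a - b) <;> linarith

theorem le_of_cosh_le_cosh {x y : ℝ} (hx : 0 ≤ x) (hy : 0 ≤ y) (h : cosh x ≤ cosh y) : x ≤ y := by
  rwa [Real.cosh_le_cosh, abs_of_nonneg hx, abs_of_nonneg hy] at h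

theorem triangle_defect_sign_iff_markov_general (p q r a b c : ℝ)
    (hpq : p ≤ q) (hqr : q ≤ r)
    (ha : 0 ≤ a) (hb : 0 ≤ b) (hc : 0 ≤ c)
    (hca : Real.cosh a = p / 2) (hcb : Real.cosh b = q / 2)
    (hcc : Real.cosh c = r / 2) :
    (0 < a + b - c ↔ p ^ 2 + q ^ 2 + r ^ 2 - p * q * r < 4) ∧
    (a + b - c = 0 ↔ p ^ 2 + q ^ 2 + r ^ 2 - p * q * r = 4) ∧
    (a + b - c < 0 ↔ 4 < p ^ 2 + q ^ 2 + r ^ 2 - p * q * r) := by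
  have hac : a ≤ c := le_of_cosh_le_cosh ha hc (by linarith)
  have hbc : b ≤ c := le_of_cosh_le_cosh hb hc (by linarith)
  have hsign := sign_add_sub_eq_sign_four_sub_markovConstant ha hb hac hbc
  obtain rfl : p = 2 * cosh a := by linarith
  obtain rfl : q = 2 * cosh b := by linarith
  obtain rfl : r = 2 * cosh c := by linarith
  refine ⟨?_, ?_, ?_⟩
  · rw [← sign_eq_one_iff, hsign, sign_eq_one_iff, sub_pos, markovConstant]
  · rw [← sign_eq_zero_iff, hsign, sign_eq_zero_iff, sub_eq_zero, eq_comm, markovConstant]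
  · rw [← sign_eq_neg_one_iff, hsign, sign_eq_neg_one_iff, sub_neg, markovConstant]

/-- the triangle-inequality defect `Δ = a + b - c` of the hyperbolic
distances `a, b, c` with `2cosh a = p`, `2cosh b = q`, `2cosh c = r` has the same
sign as `4 - C`, where `C = p² + q² + r² - pqr`. -/
theorem triangle_defect_sign_iff_markov (p q r a b c : ℝ)
    (hp : 2 ≤ p) (hpq : p ≤ q) (hqr : q ≤ r)
    (ha : 0 ≤ a) (hb : 0 ≤ b) (hc : 0 ≤ c)
    (hca : Real.cosh a = p / 2) (hcb : Real.cosh b = q / 2)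
    (hcc : Real.cosh c = r / 2) :
    (0 < a + b - c ↔ p ^ 2 + q ^ 2 + r ^ 2 - p * q * r < 4) ∧
    (a + b - c = 0 ↔ p ^ 2 + q ^ 2 + r ^ 2 - p * q * r = 4) ∧
    (a + b - c < 0 ↔ 4 < p ^ 2 + q ^ 2 + r ^ 2 - p * q * r) :=
  triangle_defect_sign_iff_markov_general p q r a b c hpq hqr ha hb hc hca hcb hcc
end

section
/- Let p, q, r ≥ 0 be real numbers, let M be the symmetric 3×3 matrix with diagonal entries 2 and off-diagonal entries m_12 = m_21 = −p, m_13 = m_31 = −q, m_23 = m_32 = −r, and set C = p² + q² + r² + pqr (the Markov constant of an acyclic rank-3 quiver with weights p, q, r). Then det M = −2(C − 4); moreover M is positive definite if and only if C < 4, and M is positive semidefinite if and only if C ≤ 4. -/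
/-!
Expanding gives `det M = -2 (C - 4)`. Completing the square in `x₀` and then in `x₁` writes
`2 (4 - p²) xᵀ M x` as a sum of squares with coefficients `4 - p²`, `1` and `4 (4 - C)`;
since `pqr ≥ 0` forces `p² ≤ C`, this makes `M` positive semidefinite when `C ≤ 4` (at the
boundary `p² = 4` we get `q = r = 0` and `M` is visibly semidefinite). Conversely a positive
semidefinite matrix has `det ≥ 0`, and it is positive definite exactly when `det ≠ 0`.
-/

open Matrix

namespace AcyclicQuiver

def gram (p q r : ℝ) : Matrix (Fin 3) (Fin 3) ℝ := !![2, -p, -q; -p, 2, -r; -q, -r, 2]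

def markovConstant (p q r : ℝ) : ℝ := p ^ 2 + q ^ 2 + r ^ 2 + p * q * r

variable (p q r : ℝ)

theorem det_gram : (gram p q r).det = -2 * (markovConstant p q r - 4) := by
  simp only [gram, markovConstant, det_fin_three, of_apply, cons_val', cons_val_zero,
    cons_val_one, cons_val_two, empty_val', cons_val_fin_one, head_cons, tail_cons, head_fin_const]
  ring

theorem gram_isHermitian : (gram p q r).IsHermitian := by
  ext i j
  fin_cases i <;> fin_cases j <;> simp [gram]

theorem star_dotProduct_gram_mulVec (x : Fin 3 → ℝ) :
    star x ⬝ᵥ (gram p q r *ᵥ x) = 2 * x 0 ^ 2 + 2 * x 1 ^ 2 + 2 * x 2 ^ 2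
      - 2 * p * x 0 * x 1 - 2 * q * x 0 * x 2 - 2 * r * x 1 * x 2 := by
  simp [gram, dotProduct, mulVec, Fin.sum_univ_three]
  ring

variable {p q r}

theorem sq_le_markovConstant (hpqr : 0 ≤ p * q * r) : p ^ 2 ≤ markovConstant p q r := by
  unfold markovConstant
  nlinarith [sq_nonneg q, sq_nonneg r]

theorem gram_form_nonneg (hpqr : 0 ≤ p * q * r) (hC : markovConstant p q r ≤ 4) (a b c : ℝ) :
    0 ≤ 2 * a ^ 2 + 2 * b ^ 2 + 2 * c ^ 2 - 2 * p * a * b - 2 * q * a * c - 2 * r * b * c := by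
  have hp2 : p ^ 2 ≤ 4 := (sq_le_markovConstant hpqr).trans hC
  rcases hp2.lt_or_eq with hp2_lt | hp2_eq
  · -- `4 (4 - C) = -2 det M` is the Schur complement left on `c²`.
    have key : 2 * (4 - p ^ 2) *
        (2 * a ^ 2 + 2 * b ^ 2 + 2 * c ^ 2 - 2 * p * a * b - 2 * q * a * c - 2 * r * b * c) =
        (4 - p ^ 2) * (2 * a - p * b - q * c) ^ 2 + ((4 - p ^ 2) * b - (2 * r + p * q) * c) ^ 2
          + 4 * (4 - markovConstant p q r) * c ^ 2 := by
      unfold markovConstant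
      ring
    have hp2' : 0 < 4 - p ^ 2 := sub_pos.mpr hp2_lt
    have hC' : 0 ≤ 4 - markovConstant p q r := by linarith
    refine nonneg_of_mul_nonneg_right ?_ (by positivity : (0 : ℝ) < 2 * (4 - p ^ 2))
    rw [key]
    positivity
  · have hqr : q ^ 2 + r ^ 2 ≤ 0 := by unfold markovConstant at hC; linarith
    obtain rfl : q = 0 := by nlinarith [sq_nonneg q, sq_nonneg r]
    obtain rfl : r = 0 := by nlinarith [sq_nonneg r]
    nlinarith [sq_nonneg (2 * a - p * b), sq_nonneg c]

theorem gram_posSemidef (hpqr : 0 ≤ p * q * r) (hC : markovConstant p q r ≤ 4) :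
    (gram p q r).PosSemidef :=
  posSemidef_iff_dotProduct_mulVec.mpr ⟨gram_isHermitian p q r, fun x => by
    rw [star_dotProduct_gram_mulVec]
    exact gram_form_nonneg hpqr hC _ _ _⟩

theorem gram_posSemidef_iff (hpqr : 0 ≤ p * q * r) :
    (gram p q r).PosSemidef ↔ markovConstant p q r ≤ 4 := by
  refine ⟨fun h => ?_, gram_posSemidef hpqr⟩
  have := h.det_nonneg
  rw [det_gram] at this
  linarith

theorem gram_posDef_iff (hpqr : 0 ≤ p * q * r) :
    (gram p q r).PosDef ↔ markovConstant p q r < 4 := by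
  refine ⟨fun h => ?_, fun hC => ?_⟩
  · have := h.det_pos
    rw [det_gram] at this
    linarith
  · rw [(gram_posSemidef hpqr hC.le).posDef_iff_det_ne_zero, det_gram]
    linarith

end AcyclicQuiver

/-- the Gram matrix of an acyclic rank 3 quiver with weights
`p, q, r ≥ 0` has determinant `-2(C - 4)` where `C = p² + q² + r² + pqr`, and it
is positive (semi)definite iff `C < 4` (resp. `C ≤ 4`). -/
theorem gram_det_and_definiteness (p q r : ℝ) (hp : 0 ≤ p) (hq : 0 ≤ q) (hr : 0 ≤ r) :
    (!![(2 : ℝ), -p, -q; -p, 2, -r; -q, -r, 2]).det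
      = -2 * ((p ^ 2 + q ^ 2 + r ^ 2 + p * q * r) - 4) ∧
    ((!![(2 : ℝ), -p, -q; -p, 2, -r; -q, -r, 2]).PosDef ↔
      p ^ 2 + q ^ 2 + r ^ 2 + p * q * r < 4) ∧
    ((!![(2 : ℝ), -p, -q; -p, 2, -r; -q, -r, 2]).PosSemidef ↔
      p ^ 2 + q ^ 2 + r ^ 2 + p * q * r ≤ 4) := by
  have hpqr : 0 ≤ p * q * r := by positivity
  exact ⟨AcyclicQuiver.det_gram p q r, AcyclicQuiver.gram_posDef_iff hpqr,
    AcyclicQuiver.gram_posSemidef_iff hpqr⟩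
end

section
/- Let B be a mutation-cyclic real skew-symmetric 3×3 matrix whose mutation class is finite. Then |b_12| = |b_23| = |b_31| = 2, i.e. B is the Markov quiver (2,2,2). -/
open Matrix
noncomputable section

/-! In a cyclic triangle with positive weights, mutation at a vertex reverses the orientation and
replaces the weight `x` of the opposite edge by `yz - x`, where `y, z` are the other two weights.
Mutation-cyclicity says that every weight reached in this way stays positive. If all weights are at
least `2` but not all equal to `2`, jumping the smallest one keeps them at least `2` and strictly
increases their sum; if some weight is below `2`, jumping the largest one keeps a weight below `2`
and strictly decreases the sum. Either way the mutation class has matrices with infinitely many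
different weight sums, so a finite class forces the weights `(2, 2, 2)`. -/

lemma Set.Finite.eq_empty_of_forall_exists_lt {α β : Type*} [LinearOrder β] {s : Set α}
    (hs : s.Finite) (f : α → β) (h : ∀ x ∈ s, ∃ y ∈ s, f x < f y) : s = ∅ := by
  by_contra hne
  obtain ⟨x, hx, hmax⟩ := s.exists_max_image f hs (Set.nonempty_iff_ne_empty.2 hne)
  obtain ⟨y, hy, hxy⟩ := h x hx
  exact (hmax y hy).not_gt hxy

lemma Fin.eq_or_eq_add_one_or_eq_add_two (k j : Fin 3) : j = k ∨ j = k + 1 ∨ j = k + 2 := by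
  fin_cases k <;> fin_cases j <;> decide

lemma Fin.forall_fin_three_rotate (k : Fin 3) {p : Fin 3 → Prop} :
    (∀ i, p i) ↔ p k ∧ p (k + 1) ∧ p (k + 2) := by
  refine ⟨fun h => ⟨h _, h _, h _⟩, fun ⟨h₀, h₁, h₂⟩ i => ?_⟩
  rcases Fin.eq_or_eq_add_one_or_eq_add_two k i with rfl | rfl | rfl <;> assumption

lemma Fin.sum_univ_three_rotate {M : Type*} [AddCommMonoid M] (k : Fin 3) (f : Fin 3 → M) :
    ∑ i, f i = f k + f (k + 1) + f (k + 2) := by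
  fin_cases k <;> simp [Fin.sum_univ_three] <;> abel

/-- The Vieta jump of the Markov-type equation `x² + y² + z² − xyz = C` in the variable `k`. -/
def vietaJump (w : Fin 3 → ℝ) (k : Fin 3) : Fin 3 → ℝ :=
  Function.update w k (w (k + 1) * w (k + 2) - w k)

section vietaJump

variable {w : Fin 3 → ℝ} {k : Fin 3}

@[simp] lemma vietaJump_apply_self : vietaJump w k k = w (k + 1) * w (k + 2) - w k := by
  simp [vietaJump]

@[simp] lemma vietaJump_apply_add_one : vietaJump w k (k + 1) = w (k + 1) :=
  Function.update_of_ne (by fin_cases k <;> decide) _ _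

@[simp] lemma vietaJump_apply_add_two : vietaJump w k (k + 2) = w (k + 2) :=
  Function.update_of_ne (by fin_cases k <;> decide) _ _

lemma sum_vietaJump :
    ∑ i, vietaJump w k i = ∑ i, w i + (w (k + 1) * w (k + 2) - 2 * w k) := by
  rw [Fin.sum_univ_three_rotate k (vietaJump w k), Fin.sum_univ_three_rotate k w]
  simp only [vietaJump_apply_self, vietaJump_apply_add_one, vietaJump_apply_add_two]
  ring

lemma two_le_vietaJump (h2 : ∀ i, 2 ≤ w i) (hk : ∀ i, w k ≤ w i) (i : Fin 3) :
    2 ≤ vietaJump w k i := by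
  rcases Fin.eq_or_eq_add_one_or_eq_add_two k i with rfl | rfl | rfl
  · rw [vietaJump_apply_self]
    nlinarith [h2 i, h2 (i + 1), hk (i + 2)]
  · rw [vietaJump_apply_add_one]
    exact h2 _
  · rw [vietaJump_apply_add_two]
    exact h2 _

lemma sum_lt_sum_vietaJump (h2 : ∀ i, 2 ≤ w i) (h6 : 6 < ∑ i, w i) (hk : ∀ i, w k ≤ w i) :
    ∑ i, w i < ∑ i, vietaJump w k i := by
  rw [sum_vietaJump, lt_add_iff_pos_right, sub_pos]
  rw [Fin.sum_univ_three_rotate k] at h6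
  rw [Fin.forall_fin_three_rotate k] at h2 hk
  obtain ⟨hx, hy, hz⟩ := h2
  obtain ⟨-, hxy, hxz⟩ := hk
  -- `yz ≥ 2z ≥ 2x`, with equality throughout only at `(2, 2, 2)`
  by_contra! hle
  have hz' : w (k + 2) = w k := by nlinarith
  have hy' : w (k + 1) = 2 := by nlinarith
  linarith

lemma exists_vietaJump_lt_two (h2 : ∃ i, w i < 2) (hk : ∀ i, w i ≤ w k) : ∃ i, vietaJump w k i < 2 := by
  obtain ⟨i, hi⟩ := h2
  rcases Fin.eq_or_eq_add_one_or_eq_add_two k i with rfl | rfl | rfl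
  · exact ⟨i + 1, by simpa using (hk (i + 1)).trans_lt hi⟩
  · exact ⟨k + 1, by simpa using hi⟩
  · exact ⟨k + 2, by simpa using hi⟩

lemma sum_vietaJump_lt_sum (hpos : ∀ i, 0 < w i) (h2 : ∃ i, w i < 2)
    (hk : ∀ i, w i ≤ w k) : ∑ i, vietaJump w k i < ∑ i, w i := by
  rw [sum_vietaJump, add_lt_iff_neg_left, sub_neg]
  have hy := hpos (k + 1)
  have hz := hpos (k + 2)
  obtain ⟨i, hi⟩ := h2
  rcases Fin.eq_or_eq_add_one_or_eq_add_two k i with rfl | rfl | rfl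
  · nlinarith [hk (i + 1), hk (i + 2)]
  · nlinarith [hk (k + 2)]
  · nlinarith [hk (k + 1)]

end vietaJump

theorem eq_two_of_finite_of_vietaJump_mem {W : Set (Fin 3 → ℝ)} (hW : W.Finite)
    (hpos : ∀ w ∈ W, ∀ i, 0 < w i) (hjump : ∀ w ∈ W, ∀ k, vietaJump w k ∈ W)
    {w : Fin 3 → ℝ} (hw : w ∈ W) : w = 2 := by
  have hsmall : {w ∈ W | ∃ i, w i < 2} = ∅ := by
    refine (hW.sep _).eq_empty_of_forall_exists_lt (fun w => -∑ i, w i) ?_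
    rintro w ⟨hwW, h2⟩
    obtain ⟨k, hk⟩ := Finite.exists_max w
    exact ⟨vietaJump w k, ⟨hjump w hwW k, exists_vietaJump_lt_two h2 hk⟩,
      neg_lt_neg (sum_vietaJump_lt_sum (hpos w hwW) h2 hk)⟩
  have hlarge : {w ∈ W | (∀ i, 2 ≤ w i) ∧ 6 < ∑ i, w i} = ∅ := by
    refine (hW.sep _).eq_empty_of_forall_exists_lt (fun w => ∑ i, w i) ?_
    rintro w ⟨hwW, h2, h6⟩
    obtain ⟨k, hk⟩ := Finite.exists_min w
    have hlt := sum_lt_sum_vietaJump h2 h6 hk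
    exact ⟨vietaJump w k, ⟨hjump w hwW k, two_le_vietaJump h2 hk, h6.trans hlt⟩, hlt⟩
  have h2 : ∀ i, 2 ≤ w i := fun i => not_lt.1 fun hi =>
    hsmall.subset ⟨hw, i, hi⟩
  have h6 : ∑ i, w i ≤ 6 := not_lt.1 fun h6 => hlarge.subset ⟨hw, h2, h6⟩
  ext i
  rw [Fin.sum_univ_three_rotate i] at h6
  rw [Pi.ofNat_apply]
  linarith [h2 i, h2 (i + 1), h2 (i + 2)]

/-- The edge opposite vertex `k` has weight `w k`; the sign `e` fixes the orientation. -/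
def cyclicMatrix (e : ℝ) (w : Fin 3 → ℝ) : Matrix (Fin 3) (Fin 3) ℝ :=
  !![0, e * w 2, -(e * w 1); -(e * w 2), 0, e * w 0; e * w 1, -(e * w 0), 0]

def weights (B : Matrix (Fin 3) (Fin 3) ℝ) : Fin 3 → ℝ :=
  ![|B 1 2|, |B 2 0|, |B 0 1|]

section cyclicMatrix

variable {e : ℝ} {w : Fin 3 → ℝ}

lemma mutate_cyclicMatrix (he : |e| = 1) (hw : ∀ i, 0 ≤ w i) (k : Fin 3) :
    mutate k (cyclicMatrix e w) = cyclicMatrix (-e) (vietaJump w k) := by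
  have habs : ∀ i, |e * w i| = w i := fun i => by rw [abs_mul, he, one_mul, abs_of_nonneg (hw i)]
  ext i j
  fin_cases k <;> fin_cases i <;> fin_cases j <;>
    simp [mutate, cyclicMatrix, vietaJump, habs, Function.update] <;> ring

lemma weights_cyclicMatrix (he : |e| = 1) (hw : ∀ i, 0 ≤ w i) : weights (cyclicMatrix e w) = w := by
  ext i
  fin_cases i <;> simp [weights, cyclicMatrix, abs_mul, he, abs_of_nonneg (hw _)]

lemma mul_pos_of_isCyclicMat_cyclicMatrix (he : |e| = 1) (h : IsCyclicMat (cyclicMatrix e w))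
    (i j : Fin 3) : 0 < w i * w j := by
  have hee : e * e = 1 := by rw [← abs_mul_abs_self, he, one_mul]
  have hsign : (∀ i, 0 < e * w i) ∨ ∀ i, e * w i < 0 := by
    simp only [IsCyclicMat, cyclicMatrix, Fin.forall_fin_three_rotate 2] at h ⊢
    simpa using h
  have : 0 < (e * w i) * (e * w j) := by
    rcases hsign with h | h
    · exact mul_pos (h i) (h j)
    · exact mul_pos_of_neg_of_neg (h i) (h j)
  rwa [show (e * w i) * (e * w j) = (e * e) * (w i * w j) by ring, hee, one_mul] at this

lemma exists_eq_cyclicMatrix {B : Matrix (Fin 3) (Fin 3) ℝ} (hB : Bᵀ = -B) (h : IsCyclicMat B) :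
    ∃ e w, |e| = 1 ∧ (∀ i, 0 < w i) ∧ B = cyclicMatrix e w := by
  have hskew : ∀ i j, B j i = -B i j := fun i j => by
    simpa using congrFun (congrFun hB i) j
  have hdiag : ∀ i, B i i = 0 := fun i => by linarith [hskew i i]
  have hB_eq : ∀ e : ℝ, e * e = 1 → B = cyclicMatrix e ![e * B 1 2, e * B 2 0, e * B 0 1] := by
    intro e hee
    ext i j
    fin_cases i <;> fin_cases j <;>
      simp [cyclicMatrix, hdiag, hskew 0 1, hskew 1 2, hskew 2 0, ← mul_assoc, hee]
  rcases h with ⟨h₀, h₁, h₂⟩ | ⟨h₀, h₁, h₂⟩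
  · refine ⟨1, _, by norm_num, ?_, hB_eq 1 (by norm_num)⟩
    simp [Fin.forall_fin_three_rotate 0, h₀, h₁, h₂]
  · refine ⟨-1, _, by norm_num, ?_, hB_eq (-1) (by norm_num)⟩
    simp [Fin.forall_fin_three_rotate 0, h₀, h₁, h₂]

end cyclicMatrix

def cyclicWeights (B : Matrix (Fin 3) (Fin 3) ℝ) : Set (Fin 3 → ℝ) :=
  {w | (∀ i, 0 < w i) ∧ ∃ e, |e| = 1 ∧ MutationEquiv B (cyclicMatrix e w)}

section cyclicWeights

variable {B : Matrix (Fin 3) (Fin 3) ℝ}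

lemma finite_cyclicWeights (hfin : {B' | MutationEquiv B B'}.Finite) :
    (cyclicWeights B).Finite :=
  (hfin.image weights).subset fun _ ⟨hpos, _, he, hBw⟩ =>
    ⟨_, hBw, weights_cyclicMatrix he fun i => (hpos i).le⟩

lemma vietaJump_mem_cyclicWeights (hcyc : IsMutationCyclic B) {w : Fin 3 → ℝ}
    (hw : w ∈ cyclicWeights B) (k : Fin 3) : vietaJump w k ∈ cyclicWeights B := by
  obtain ⟨hpos, e, he, hBw⟩ := hw
  have he' : |-e| = 1 := by rwa [abs_neg]
  have hequiv : MutationEquiv B (cyclicMatrix (-e) (vietaJump w k)) :=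
    hBw.tail (Or.inl ⟨k, (mutate_cyclicMatrix he (fun i => (hpos i).le) k).symm⟩)
  have hmul := mul_pos_of_isCyclicMat_cyclicMatrix he' (hcyc _ hequiv)
  refine ⟨fun i => pos_of_mul_pos_left (hmul i (k + 1)) ?_, -e, he', hequiv⟩
  rw [vietaJump_apply_add_one]
  exact (hpos _).le

lemma weights_mem_cyclicWeights (hB : Bᵀ = -B) (hcyc : IsMutationCyclic B) :
    weights B ∈ cyclicWeights B := by
  obtain ⟨e, w, he, hpos, hBw⟩ := exists_eq_cyclicMatrix hB (hcyc B .refl)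
  rw [hBw, weights_cyclicMatrix he fun i => (hpos i).le]
  exact ⟨hpos, e, he, hBw ▸ .refl⟩

end cyclicWeights

/-- a mutation-cyclic matrix of finite mutation type is the Markov
quiver `(2,2,2)`. -/
theorem mutation_cyclic_finite_is_markov_quiver
    (B : Matrix (Fin 3) (Fin 3) ℝ) (hB : Bᵀ = -B)
    (hcyc : IsMutationCyclic B)
    (hfin : {B' | MutationEquiv B B'}.Finite) :
    |B 0 1| = 2 ∧ |B 1 2| = 2 ∧ |B 2 0| = 2 := by
  have h := eq_two_of_finite_of_vietaJump_mem (finite_cyclicWeights hfin) (fun _ hw => hw.1)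
    (fun _ hw => vietaJump_mem_cyclicWeights hcyc hw) (weights_mem_cyclicWeights hB hcyc)
  exact ⟨congrFun h 2, congrFun h 0, congrFun h 1⟩
end
end
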